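/- arXiv:2507.15727 — 13 statements merged into one kernel-verified Lean document; each statement's English description precedes it below -/
import Mathlib

section
/- Consider the M-player offline buying game in which each agent m simultaneously chooses one action from {rent, individual-buy, group-buy}; agent m's cost is N_m if it rents, B if it buys individually, and G/L if it group-buys, where L is the number of agents choosing group-buy. Assume N_1 ≤ … ≤ N_M and that the set S := {ℓ ∈ {0,…,M−1} : N_{ℓ+1} > min(G/(M−ℓ), B)} is nonempty, and let ℓ* := min S. Then the strategy profile σ in which σ_m = rent for all m ≤ ℓ*, and for all m > ℓ*, σ_m = group-buy if G/(M−ℓ*) ≤ B and σ_m = individual-buy otherwise, is a (pure) Nash equilibrium: for every agent m and every alternative action a, agent m's cost under σ is at most its cost under the profile obtained from σ by replacing σ_m with a. -/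
/-- Actions in the offline buying game. -/
inductive SkiAction : Type
  | rent : SkiAction
  | ibuy : SkiAction
  | gbuy : SkiAction
  deriving DecidableEq

open SkiAction

/-- Cost of agent `m` under profile `σ` in the `M`-player offline buying game:
`N m` for renting, `B` for an individual pass, and `G / L` for a group pass,
where `L` is the number of agents choosing group-buy. -/
noncomputable def skiCost (M : ℕ) (N : ℕ → ℝ) (B G : ℝ) (σ : ℕ → SkiAction) (m : ℕ) : ℝ :=
  match σ m with
  | rent => N m
  | ibuy => B
  | gbuy => G / (((Finset.Icc 1 M).filter (fun i => σ i = gbuy)).card : ℝ)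

/-- The profile in which agents `m ≤ ℓ*` rent and agents `m > ℓ*` buy
(the group pass if `G/(M-ℓ*) ≤ B`, else individual passes) is a pure Nash equilibrium. -/
theorem stmt0 (M : ℕ) (hM : 2 ≤ M) (N : ℕ → ℝ) (B G : ℝ)
    (hB : 0 < B) (hBG : B < G) (hGMB : G < (M : ℝ) * B)
    (hNpos : ∀ m, 1 ≤ m → m ≤ M → 0 < N m)
    (hNmono : ∀ i j, 1 ≤ i → i ≤ j → j ≤ M → N i ≤ N j)
    (S : Set ℕ)
    (hS : S = {ℓ | ℓ < M ∧ N (ℓ + 1) > min (G / ((M : ℝ) - (ℓ : ℝ))) B})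
    (hSne : S.Nonempty)
    (ℓstar : ℕ) (hℓstar : IsLeast S ℓstar)
    (σ : ℕ → SkiAction)
    (hσ : ∀ m, σ m = if m ≤ ℓstar then SkiAction.rent
        else if G / ((M : ℝ) - (ℓstar : ℝ)) ≤ B then SkiAction.gbuy else SkiAction.ibuy) :
    ∀ m, 1 ≤ m → m ≤ M → ∀ a : SkiAction,
      skiCost M N B G σ m ≤ skiCost M N B G (Function.update σ m a) m := by
  intro m hm1 hmM a
  obtain ⟨hℓS, hℓlb⟩ := hℓstar
  rw [hS] at hℓS
  obtain ⟨hℓM, hℓN⟩ := hℓS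
  have hG0 : (0:ℝ) < G := hB.trans hBG
  have hKpos : (0:ℝ) < (M:ℝ) - ℓstar := by
    have : (ℓstar : ℝ) < M := by exact_mod_cast hℓM
    linarith
  have hmin : ∀ ℓ, ℓ < ℓstar → N (ℓ+1) ≤ min (G / ((M:ℝ) - ℓ)) B := by
    intro ℓ hℓ
    by_contra h
    push_neg at h
    have : ℓ ∈ S := by rw [hS]; exact ⟨hℓ.trans hℓM, h⟩
    exact absurd (hℓlb this) (by omega)
  -- card helper: profiles whose gbuy set is exactly (ℓstar, M]
  have cardA : ∀ τ : ℕ → SkiAction,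
      (∀ i, 1 ≤ i → i ≤ M → (τ i = gbuy ↔ ℓstar < i)) →
      ((((Finset.Icc 1 M).filter (fun i => τ i = gbuy)).card : ℝ)) = (M:ℝ) - ℓstar := by
    intro τ h
    have he : (Finset.Icc 1 M).filter (fun i => τ i = gbuy) = Finset.Icc (ℓstar+1) M := by
      ext i
      simp only [Finset.mem_filter, Finset.mem_Icc]
      constructor
      · rintro ⟨⟨h1, h2⟩, h3⟩
        have := (h i h1 h2).1 h3
        exact ⟨by omega, h2⟩
      · rintro ⟨h1, h2⟩
        have hi : 1 ≤ i := by omega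
        exact ⟨⟨hi, h2⟩, (h i hi h2).2 (by omega)⟩
    rw [he, Nat.card_Icc]
    have : M + 1 - (ℓstar + 1) = M - ℓstar := by omega
    rw [this, Nat.cast_sub hℓM.le]
  -- card helper: gbuy set is (ℓstar, M] plus one extra renter m
  have cardA1 : ∀ τ : ℕ → SkiAction, m ≤ ℓstar →
      (∀ i, 1 ≤ i → i ≤ M → (τ i = gbuy ↔ (ℓstar < i ∨ i = m))) →
      ((((Finset.Icc 1 M).filter (fun i => τ i = gbuy)).card : ℝ)) = (M:ℝ) - ℓstar + 1 := by
    intro τ hmℓ h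
    have he : (Finset.Icc 1 M).filter (fun i => τ i = gbuy)
        = insert m (Finset.Icc (ℓstar+1) M) := by
      ext i
      simp only [Finset.mem_filter, Finset.mem_Icc, Finset.mem_insert]
      constructor
      · rintro ⟨⟨h1, h2⟩, h3⟩
        rcases (h i h1 h2).1 h3 with hc | hc
        · exact Or.inr ⟨by omega, h2⟩
        · exact Or.inl hc
      · rintro (hc | ⟨h1, h2⟩)
        · exact ⟨⟨by omega, by omega⟩, (h i (by omega) (by omega)).2 (Or.inr hc)⟩
        · have hi : 1 ≤ i := by omega
          exact ⟨⟨hi, h2⟩, (h i hi h2).2 (Or.inl (by omega))⟩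
    rw [he, Finset.card_insert_of_notMem (by simp [Finset.mem_Icc]; omega), Nat.card_Icc]
    have : M + 1 - (ℓstar + 1) = M - ℓstar := by omega
    rw [this]
    push_cast [Nat.cast_sub hℓM.le]
    ring
  -- card helper: only m gbuys
  have card1 : ∀ τ : ℕ → SkiAction,
      (∀ i, 1 ≤ i → i ≤ M → (τ i = gbuy ↔ i = m)) →
      ((((Finset.Icc 1 M).filter (fun i => τ i = gbuy)).card : ℝ)) = 1 := by
    intro τ h
    have he : (Finset.Icc 1 M).filter (fun i => τ i = gbuy) = {m} := by
      ext i
      simp only [Finset.mem_filter, Finset.mem_Icc, Finset.mem_singleton]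
      constructor
      · rintro ⟨⟨h1, h2⟩, h3⟩
        exact (h i h1 h2).1 h3
      · intro hc
        exact ⟨⟨by omega, by omega⟩, (h i (by omega) (by omega)).2 hc⟩
    rw [he]; simp
  have hupd : (Function.update σ m a) m = a := Function.update_self m a σ
  by_cases hA : G / ((M:ℝ) - ℓstar) ≤ B
  · -- group-buy regime
    by_cases hmℓ : m ≤ ℓstar
    · -- m is a renter
      have hσm : σ m = rent := by rw [hσ m, if_pos hmℓ]
      have hN : N m ≤ min (G / ((M:ℝ) - (m-1:ℕ))) B := by
        have := hmin (m-1) (by omega)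
        rwa [show m - 1 + 1 = m by omega] at this
      have hcost : skiCost M N B G σ m = N m := by
        simp [skiCost, hσm]
      rw [hcost]
      cases a with
      | rent => simp [skiCost, hupd]
      | ibuy =>
        have : skiCost M N B G (Function.update σ m ibuy) m = B := by
          simp [skiCost, hupd]
        rw [this]; exact hN.trans (min_le_right _ _)
      | gbuy =>
        have hc : ((((Finset.Icc 1 M).filter
            (fun i => Function.update σ m gbuy i = gbuy)).card : ℝ)) = (M:ℝ) - ℓstar + 1 := by
          apply cardA1 _ hmℓ
          intro i h1 h2
          rcases eq_or_ne i m with rfl | hne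
          · simp [Function.update_self]
          · rw [Function.update_of_ne hne, hσ i]
            split_ifs with h3
            · simp; omega
            · simp; omega
        have : skiCost M N B G (Function.update σ m gbuy) m
            = G / ((M:ℝ) - ℓstar + 1) := by
          simp only [skiCost, hupd, hc]
        rw [this]
        have h1 : N m ≤ G / ((M:ℝ) - (m-1:ℕ)) := hN.trans (min_le_left _ _)
        have h2 : G / ((M:ℝ) - (m-1:ℕ)) ≤ G / ((M:ℝ) - ℓstar + 1) := by
          have hc1 : ((m-1:ℕ):ℝ) = (m:ℝ) - 1 := by
            push_cast [Nat.cast_sub hm1]; ring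
          rw [hc1]
          have hmr : (m:ℝ) ≤ (ℓstar:ℝ) := by exact_mod_cast hmℓ
          gcongr <;> linarith
        linarith
    · -- m is a group buyer
      push_neg at hmℓ
      have hσm : σ m = gbuy := by rw [hσ m, if_neg (by omega), if_pos hA]
      have hcardσ : ((((Finset.Icc 1 M).filter (fun i => σ i = gbuy)).card : ℝ))
          = (M:ℝ) - ℓstar := by
        apply cardA
        intro i h1 h2
        rw [hσ i]
        split_ifs with h3
        · simp; omega
        · simp; omega
      have hcost : skiCost M N B G σ m = G / ((M:ℝ) - ℓstar) := by
        simp only [skiCost, hσm, hcardσ]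
      rw [hcost]
      have hNlow : G / ((M:ℝ) - ℓstar) < N m := by
        have h1 : N (ℓstar + 1) ≤ N m := hNmono _ _ (by omega) (by omega) hmM
        have h2 : min (G / ((M:ℝ) - ℓstar)) B = G / ((M:ℝ) - ℓstar) := min_eq_left hA
        rw [h2] at hℓN
        linarith
      cases a with
      | rent =>
        have : skiCost M N B G (Function.update σ m rent) m = N m := by
          simp [skiCost, hupd]
        rw [this]; linarith
      | ibuy =>
        have : skiCost M N B G (Function.update σ m ibuy) m = B := by
          simp [skiCost, hupd]
        rw [this]; exact hA
      | gbuy =>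
        have : Function.update σ m gbuy = σ := by
          rw [← hσm]; exact Function.update_eq_self m σ
        rw [this, hcost]
  · -- individual-buy regime
    push_neg at hA
    have hnogb : ∀ i, σ i ≠ gbuy := by
      intro i
      rw [hσ i]
      split_ifs with h1 h2
      · simp
      · exact absurd h2 (not_le.mpr hA)
      · simp
    by_cases hmℓ : m ≤ ℓstar
    · -- renter
      have hσm : σ m = rent := by rw [hσ m, if_pos hmℓ]
      have hN : N m ≤ min (G / ((M:ℝ) - (m-1:ℕ))) B := by
        have := hmin (m-1) (by omega)
        rwa [show m - 1 + 1 = m by omega] at this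
      have hNB : N m ≤ B := hN.trans (min_le_right _ _)
      have hcost : skiCost M N B G σ m = N m := by simp [skiCost, hσm]
      rw [hcost]
      cases a with
      | rent => simp [skiCost, hupd]
      | ibuy =>
        have : skiCost M N B G (Function.update σ m ibuy) m = B := by
          simp [skiCost, hupd]
        rw [this]; exact hNB
      | gbuy =>
        have hc : ((((Finset.Icc 1 M).filter
            (fun i => Function.update σ m gbuy i = gbuy)).card : ℝ)) = 1 := by
          apply card1
          intro i h1 h2
          rcases eq_or_ne i m with rfl | hne
          · simp [Function.update_self]
          · rw [Function.update_of_ne hne]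
            simp [hnogb i, hne]
        have : skiCost M N B G (Function.update σ m gbuy) m = G / 1 := by
          simp only [skiCost, hupd, hc]
        rw [this, div_one]
        linarith
    · -- individual buyer
      push_neg at hmℓ
      have hσm : σ m = ibuy := by rw [hσ m, if_neg (by omega), if_neg (not_le.mpr hA)]
      have hcost : skiCost M N B G σ m = B := by simp [skiCost, hσm]
      rw [hcost]
      have hNB : B < N m := by
        have h1 : N (ℓstar + 1) ≤ N m := hNmono _ _ (by omega) (by omega) hmM
        have h2 : min (G / ((M:ℝ) - ℓstar)) B = B := min_eq_right hA.le
        rw [h2] at hℓN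
        linarith
      cases a with
      | rent =>
        have : skiCost M N B G (Function.update σ m rent) m = N m := by
          simp [skiCost, hupd]
        rw [this]; linarith
      | ibuy => simp [skiCost, hupd]
      | gbuy =>
        have hc : ((((Finset.Icc 1 M).filter
            (fun i => Function.update σ m gbuy i = gbuy)).card : ℝ)) = 1 := by
          apply card1
          intro i h1 h2
          rcases eq_or_ne i m with rfl | hne
          · simp [Function.update_self]
          · rw [Function.update_of_ne hne]
            simp [hnogb i, hne]
        have : skiCost M N B G (Function.update σ m gbuy) m = G / 1 := by
          simp only [skiCost, hupd, hc]
        rw [this, div_one]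
        linarith
end

section
/- In the homogeneous multi-agent ski-rental problem, suppose K := G/M is a positive integer. Then the symmetric threshold policy with threshold T = K satisfies cost(K, N) ≤ (2 − M/G) · opt(N) for every positive integer N, with equality for N ≥ K. -/
/-- Total cost of the symmetric threshold-`T` policy on the homogeneous instance `N`:
all `M` agents rent on days `1, …, T-1` and, if still active on day `T`,
buy the cheaper of the group pass `G` and `M` individual passes. -/
def homCost (M B G T N : ℕ) : ℕ :=
  if N < T then M * N else M * (T - 1) + min G (M * B)

/-- Offline optimal cost on the homogeneous instance `N`. -/
def homOpt (M G N : ℕ) : ℕ := min (M * N) G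

/-- If `K = G/M` is a positive integer, the symmetric threshold policy with threshold `K`
satisfies `cost(K, N) ≤ (2 - M/G) · opt(N)` for every positive integer `N`,
with equality for `N ≥ K`. -/
theorem stmt1 (M B G K : ℕ) (hM : 2 ≤ M) (hB : 1 ≤ B)
    (hBG : B < G) (hGMB : G < M * B) (hK : 0 < K) (hGK : G = M * K) :
    ∀ N : ℕ, 0 < N →
      ((homCost M B G K N : ℝ) ≤ (2 - (M : ℝ) / (G : ℝ)) * (homOpt M G N : ℝ)) ∧
      (K ≤ N → (homCost M B G K N : ℝ) = (2 - (M : ℝ) / (G : ℝ)) * (homOpt M G N : ℝ)) := by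
  intro N hN
  have hG0 : 0 < G := lt_of_le_of_lt (Nat.zero_le B) hBG
  have hGR : (0:ℝ) < G := by exact_mod_cast hG0
  have hGc : (G:ℝ) = (M:ℝ) * K := by exact_mod_cast hGK
  have key : K ≤ N → (homCost M B G K N : ℝ) = (2 - (M:ℝ)/(G:ℝ)) * (homOpt M G N : ℝ) := by
    intro hKN
    have h1 : ¬ N < K := not_lt.mpr hKN
    have hmin : min G (M*B) = G := min_eq_left (le_of_lt hGMB)
    have hopt : min (M*N) G = G := min_eq_right (by rw [hGK]; exact Nat.mul_le_mul_left M hKN)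
    simp only [homCost, homOpt, h1, if_false, hmin, hopt]
    have hK1 : 1 ≤ K := hK
    push_cast [Nat.cast_sub hK1]
    field_simp
    rw [hGc]; ring
  refine ⟨?_, key⟩
  by_cases h : K ≤ N
  · exact le_of_eq (key h)
  · have h1 : N < K := not_le.mp h
    have hopt : min (M*N) G = M*N := min_eq_left (by
      rw [hGK]; exact Nat.mul_le_mul_left M (le_of_lt h1))
    simp only [homCost, homOpt, h1, if_true, hopt]
    have hMG : (M:ℝ) ≤ G := by
      rw [hGc]
      nlinarith [show (1:ℝ) ≤ K by exact_mod_cast hK, show (0:ℝ) < M by positivity]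
    have hdiv : (M:ℝ)/(G:ℝ) ≤ 1 := by
      rw [div_le_one hGR]; exact hMG
    have hnn : (0:ℝ) ≤ ((M*N : ℕ):ℝ) := by positivity
    nlinarith
end

section
/- In the homogeneous multi-agent ski-rental problem, suppose K := G/M is a positive integer. Then for every positive integer threshold T, the worst-case competitive ratio of the symmetric threshold policy with threshold T is at least 2 − M/G; concretely, cost(T, T) ≥ (2 − M/G) · opt(T). Hence no symmetric deterministic threshold policy achieves worst-case ratio better than 2 − M/G. -/
/-- If `K = G/M` is a positive integer, then for every positive integer threshold `T`
the symmetric threshold policy pays at least `(2 - M/G) · opt(T)` on the instance `N = T`,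
so no symmetric deterministic threshold policy beats the ratio `2 - M/G`. -/
theorem stmt2 (M B G K : ℕ) (hM : 2 ≤ M) (hB : 1 ≤ B)
    (hBG : B < G) (hGMB : G < M * B) (hK : 0 < K) (hGK : G = M * K) :
    ∀ T : ℕ, 0 < T →
      (2 - (M : ℝ) / (G : ℝ)) * (homOpt M G T : ℝ) ≤ (homCost M B G T T : ℝ) := by
  intro T hT
  have hG0 : 0 < G := by omega
  have hGR : (0:ℝ) < (G:ℝ) := by exact_mod_cast hG0
  unfold homCost homOpt
  rw [if_neg (lt_irrefl T), min_eq_left (le_of_lt hGMB)]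
  subst hGK
  have hMR : (0:ℝ) < (M:ℝ) := by positivity
  rcases le_or_gt T K with h | h
  · rw [min_eq_left (by exact Nat.mul_le_mul_left M h)]
    have hTR : (T:ℝ) ≤ K := by exact_mod_cast h
    have hKR : (1:ℝ) ≤ K := by exact_mod_cast hK
    have h1 : (1:ℝ) ≤ T := by exact_mod_cast hT
    push_cast [Nat.cast_sub hT]
    have hdiv : (T:ℝ) - K + 1 ≤ T/K := by
      rw [le_div_iff₀ (by positivity)]; nlinarith
    have heq : (2 - (M:ℝ)/(M*K)) * (M*T) = 2*M*T - M*(T/K) := by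
      field_simp
    rw [heq]
    nlinarith [mul_le_mul_of_nonneg_left hdiv hMR.le]
  · rw [min_eq_right (by exact Nat.mul_le_mul_left M h.le)]
    have hTR : (K:ℝ) ≤ T := by exact_mod_cast h.le
    have h1 : (1:ℝ) ≤ T := by exact_mod_cast hT
    push_cast [Nat.cast_sub hT]
    have : ((M:ℝ)) / (M*K) * (M*K) = M := by field_simp
    nlinarith [this, hMR]
end

section
/- Define f_OV(T) := (D + (M−ℓ)(T−1) + min(G, (M−ℓ)B)) / min(D + (M−ℓ)·min(T,B), G) for positive integers T (the worst-case overall competitive ratio of the symmetric threshold policy with threshold T at the given state). Suppose T* := min((G − D)/(M−ℓ), B) is a positive integer. Then f_OV(T*) ≤ f_OV(T) for every positive integer T, and f_OV(T*) = 1 + (min(G,(M−ℓ)B) − (M−ℓ))/min(G, D + (M−ℓ)B); equivalently f_OV(T*) equals 2 − (M−ℓ)/G if G ≤ (M−ℓ)B, equals 1 + (M−ℓ)(B−1)/G if (M−ℓ)B < G ≤ D + (M−ℓ)B, and equals 1 + (M−ℓ)(B−1)/(D + (M−ℓ)B) if G > D + (M−ℓ)B. -/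
/-!
Write `k = M - ℓ`, `m = min(G, kB)` and `Q = min(G, D + kB)`. For every threshold `T ≥ 1`
the denominator `d = min(D + k·min(T, B), G)` satisfies `0 < d ≤ Q`, while the numerator is
at least `d + (m - k)`; hence `f_OV(T) ≥ 1 + (m - k)/d ≥ 1 + (m - k)/Q`. The threshold `T*` is
chosen exactly so that `D + kT* = Q`, and then both inequalities are equalities.
-/

noncomputable def overallRatio (k D G B T : ℕ) : ℝ :=
  ((D + k * (T - 1) + min G (k * B) : ℕ) : ℝ) / ((min (D + k * min T B) G : ℕ) : ℝ)

noncomputable def optimalRatio (k D G B : ℕ) : ℝ :=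
  1 + (((min G (k * B) : ℕ) : ℝ) - k) / ((min G (D + k * B) : ℕ) : ℝ)

section

variable {k D G B T : ℕ}

theorem le_and_add_mul_eq_min_of_eq_min_div (hk : 0 < k)
    (hT : (T : ℝ) = min (((G : ℝ) - D) / k) B) :
    T ≤ B ∧ D + k * T = min G (D + k * B) := by
  have hkR : (0 : ℝ) < k := by exact_mod_cast hk
  rcases le_or_gt (((G : ℝ) - D) / k) B with h | h
  · rw [min_eq_left h] at hT
    rw [div_le_iff₀ hkR] at h
    have hG : D + k * T = G := by
      rw [eq_div_iff hkR.ne'] at hT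
      exact_mod_cast (by linarith : (D : ℝ) + k * T = G)
    have hGB : G ≤ D + k * B := by exact_mod_cast (by linarith : (G : ℝ) ≤ D + k * B)
    refine ⟨?_, by rw [hG, min_eq_left hGB]⟩
    nlinarith
  · rw [min_eq_right h.le, Nat.cast_inj] at hT
    subst hT
    rw [lt_div_iff₀ hkR] at h
    have hBG : D + k * T ≤ G := by exact_mod_cast (by linarith : (D : ℝ) + k * T ≤ G)
    exact ⟨le_rfl, (min_eq_right hBG).symm⟩

theorem optimalRatio_le_overallRatio (hk : 0 < k) (hkG : k ≤ G) (hB : 1 ≤ B) (hT : 1 ≤ T) :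
    optimalRatio k D G B ≤ overallRatio k D G B T := by
  set m := min G (k * B)
  set Q := min G (D + k * B)
  set d := min (D + k * min T B) G
  have hkm : k ≤ m := le_min hkG (Nat.le_mul_of_pos_right k hB)
  have hd : 0 < d := lt_min (by nlinarith [le_min hT hB]) (by omega)
  have hdQ : d ≤ Q :=
    le_min (min_le_right _ _) ((min_le_left _ _).trans (by gcongr; exact min_le_right T B))
  have hnum : d + (m - k) ≤ D + k * (T - 1) + m := by
    have hkT : k * (T - 1) + k = k * T := by
      rw [← Nat.mul_succ, Nat.succ_eq_add_one, Nat.sub_add_cancel hT]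
    have : k * min T B ≤ k * T := by gcongr; exact min_le_left T B
    omega
  have hdR : (0 : ℝ) < d := by exact_mod_cast hd
  calc optimalRatio k D G B = 1 + ((m - k : ℕ) : ℝ) / Q := by
        rw [optimalRatio, Nat.cast_sub hkm]
    _ ≤ 1 + ((m - k : ℕ) : ℝ) / d := by gcongr
    _ = ((d + (m - k) : ℕ) : ℝ) / d := by push_cast; field_simp
    _ ≤ overallRatio k D G B T := by unfold overallRatio; gcongr

theorem overallRatio_eq_optimalRatio (hk : 0 < k) (hB : 1 ≤ B) (hT : 1 ≤ T) (hTB : T ≤ B)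
    (hQ : D + k * T = min G (D + k * B)) :
    overallRatio k D G B T = optimalRatio k D G B := by
  set m := min G (k * B)
  set Q := min G (D + k * B)
  have hQG : D + k * T ≤ G := hQ ▸ min_le_left _ _
  have hkm : k ≤ m := le_min (by nlinarith) (Nat.le_mul_of_pos_right k hB)
  have hQpos : (0 : ℝ) < Q := by rw [← hQ]; exact_mod_cast (by nlinarith : 0 < D + k * T)
  have hnum : D + k * (T - 1) + m = Q + (m - k) := by
    have hkT : k * (T - 1) + k = k * T := by
      rw [← Nat.mul_succ, Nat.succ_eq_add_one, Nat.sub_add_cancel hT]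
    omega
  rw [overallRatio, hnum, min_eq_left hTB, min_eq_left hQG, hQ]
  change _ = 1 + ((m : ℝ) - k) / Q
  rw [Nat.cast_add, Nat.cast_sub hkm]
  field_simp

theorem optimalRatio_of_le (hGpos : 0 < G) (h : G ≤ k * B) :
    optimalRatio k D G B = 2 - k / G := by
  have hGR : (G : ℝ) ≠ 0 := by exact_mod_cast hGpos.ne'
  rw [optimalRatio, min_eq_left h, min_eq_left (by omega)]
  field_simp
  ring

theorem optimalRatio_of_lt_of_le (h₁ : k * B < G) (h₂ : G ≤ D + k * B) :
    optimalRatio k D G B = 1 + k * (B - 1) / G := by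
  rw [optimalRatio, min_eq_right h₁.le, min_eq_left h₂]
  push_cast
  ring

theorem optimalRatio_of_lt (h : D + k * B < G) :
    optimalRatio k D G B = 1 + k * (B - 1) / (D + k * B) := by
  rw [optimalRatio, min_eq_right (by omega), min_eq_right h.le]
  push_cast
  ring

end

theorem stmt3_general (M B G ℓ : ℕ) (hM : 2 ≤ M) (hB : 1 ≤ B)
    (hℓ : ℓ ≤ M - 1)
    (D : ℕ)
    (fOV : ℕ → ℝ)
    (hfOV : ∀ T : ℕ, fOV T =
      ((D + (M - ℓ) * (T - 1) + min G ((M - ℓ) * B) : ℕ) : ℝ) /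
      ((min (D + (M - ℓ) * min T B) G : ℕ) : ℝ))
    (Tstar : ℕ) (hTpos : 0 < Tstar)
    (hTstar : (Tstar : ℝ) = min (((G : ℝ) - (D : ℝ)) / ((M : ℝ) - (ℓ : ℝ))) (B : ℝ)) :
    (∀ T : ℕ, 0 < T → fOV Tstar ≤ fOV T) ∧
    fOV Tstar = 1 + (((min G ((M - ℓ) * B) : ℕ) : ℝ) - ((M : ℝ) - (ℓ : ℝ))) /
      ((min G (D + (M - ℓ) * B) : ℕ) : ℝ) ∧
    (G ≤ (M - ℓ) * B → fOV Tstar = 2 - ((M : ℝ) - (ℓ : ℝ)) / (G : ℝ)) ∧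
    ((M - ℓ) * B < G → G ≤ D + (M - ℓ) * B →
      fOV Tstar = 1 + ((M : ℝ) - (ℓ : ℝ)) * ((B : ℝ) - 1) / (G : ℝ)) ∧
    (D + (M - ℓ) * B < G →
      fOV Tstar = 1 + ((M : ℝ) - (ℓ : ℝ)) * ((B : ℝ) - 1) /
        ((D : ℝ) + ((M : ℝ) - (ℓ : ℝ)) * (B : ℝ))) := by
  obtain rfl : fOV = overallRatio (M - ℓ) D G B := funext hfOV
  rw [← Nat.cast_sub (by omega : ℓ ≤ M)] at hTstar ⊢
  set k := M - ℓ
  have hk : 0 < k := by omega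
  obtain ⟨hTB, hQ⟩ := le_and_add_mul_eq_min_of_eq_min_div hk hTstar
  have hQG : D + k * Tstar ≤ G := hQ ▸ min_le_left _ _
  have hkG : k ≤ G := by nlinarith
  have hval := overallRatio_eq_optimalRatio hk hB hTpos hTB hQ
  refine ⟨fun T hT => hval ▸ optimalRatio_le_overallRatio hk hkG hB hT, hval, ?_, ?_, ?_⟩
  · exact fun h => hval.trans (optimalRatio_of_le (by omega) h)
  · exact fun h₁ h₂ => hval.trans (optimalRatio_of_lt_of_le h₁ h₂)
  · exact fun h => hval.trans (optimalRatio_of_lt h)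

/-- The overall-optimal threshold `T* = min((G-D)/(M-ℓ), B)` minimizes the worst-case
overall competitive ratio `f_OV` among all positive integer thresholds, and its value
is given by the stated closed form / case distinction. -/
theorem stmt3 (M B G ℓ : ℕ) (hM : 2 ≤ M) (hB : 1 ≤ B)
    (hBG : B < G) (hGMB : G < M * B) (hℓ : ℓ ≤ M - 1)
    (N : ℕ → ℕ) (hN0 : N 0 = 0)
    (hNpos : ∀ n, 1 ≤ n → n ≤ ℓ → 0 < N n)
    (hNmono : ∀ i j, 1 ≤ i → i ≤ j → j ≤ ℓ → N i ≤ N j)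
    (D : ℕ) (hD : D = ∑ n ∈ Finset.Icc 1 ℓ, N n)
    (fOV : ℕ → ℝ)
    (hfOV : ∀ T : ℕ, fOV T =
      ((D + (M - ℓ) * (T - 1) + min G ((M - ℓ) * B) : ℕ) : ℝ) /
      ((min (D + (M - ℓ) * min T B) G : ℕ) : ℝ))
    (Tstar : ℕ) (hTpos : 0 < Tstar)
    (hTstar : (Tstar : ℝ) = min (((G : ℝ) - (D : ℝ)) / ((M : ℝ) - (ℓ : ℝ))) (B : ℝ)) :
    (∀ T : ℕ, 0 < T → fOV Tstar ≤ fOV T) ∧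
    fOV Tstar = 1 + (((min G ((M - ℓ) * B) : ℕ) : ℝ) - ((M : ℝ) - (ℓ : ℝ))) /
      ((min G (D + (M - ℓ) * B) : ℕ) : ℝ) ∧
    (G ≤ (M - ℓ) * B → fOV Tstar = 2 - ((M : ℝ) - (ℓ : ℝ)) / (G : ℝ)) ∧
    ((M - ℓ) * B < G → G ≤ D + (M - ℓ) * B →
      fOV Tstar = 1 + ((M : ℝ) - (ℓ : ℝ)) * ((B : ℝ) - 1) / (G : ℝ)) ∧
    (D + (M - ℓ) * B < G →
      fOV Tstar = 1 + ((M : ℝ) - (ℓ : ℝ)) * ((B : ℝ) - 1) /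
        ((D : ℝ) + ((M : ℝ) - (ℓ : ℝ)) * (B : ℝ))) :=
  stmt3_general M B G ℓ hM hB hℓ D fOV hfOV Tstar hTpos hTstar
end

section
/- Define f_SD(T) := (D + (M−ℓ)(T−1) + min(G, (M−ℓ)B)) / (D + min((M−ℓ)·min(T,B), G)) for positive integers T (the worst-case state-dependent competitive ratio of the symmetric threshold policy with threshold T at the given state). Suppose T* := min(G/(M−ℓ), B) is a positive integer. Then f_SD(T*) ≤ f_SD(T) for every positive integer T, and f_SD(T*) = 1 + (min(G,(M−ℓ)B) − (M−ℓ))/(D + min(G, (M−ℓ)B)); equivalently f_SD(T*) equals 1 + (G − (M−ℓ))/(D + G) if G ≤ (M−ℓ)B and equals 1 + (M−ℓ)(B−1)/(D + (M−ℓ)B) if G > (M−ℓ)B. -/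
/-!
With `k = M − ℓ` active agents and `m = min(G, kB)` the price of the cheaper pass, the threshold
`T*` is exactly the day on which renting has cost `k T* = m`. Before that day the ratio is
`1 + (m − k)/(D + kT)`, which decreases in `T`; from that day on the denominator is stuck at
`D + m` while the numerator keeps growing. Hence `T*` minimises the ratio, with value
`1 + (m − k)/(D + m)`.
-/

/-- `f_SD(T)` with `D = d`, `M − ℓ = k` and `min(G, (M − ℓ)B) = m`; the paper's denominator
`D + min((M − ℓ) min(T, B), G)` equals `d + min(kT, m)`. -/
noncomputable def sdRatio (d k m x : ℝ) : ℝ :=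
  (d + k * (x - 1) + m) / (d + min (k * x) m)

theorem sdRatio_of_mul_eq {d k m x : ℝ} (hx : k * x = m) (hdm : d + m ≠ 0) :
    sdRatio d k m x = 1 + (m - k) / (d + m) := by
  rw [sdRatio, hx, min_self]
  field_simp
  linear_combination hx

theorem one_add_div_le_sdRatio {d k m x : ℝ} (hd : 0 ≤ d) (hk : 0 < k) (hkm : k ≤ m)
    (hx : 1 ≤ x) : 1 + (m - k) / (d + m) ≤ sdRatio d k m x := by
  have hkx : 0 < k * x := by nlinarith
  rcases le_total (k * x) m with hle | hge
  · have hden : 0 < d + k * x := by linarith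
    calc 1 + (m - k) / (d + m) ≤ 1 + (m - k) / (d + k * x) := by
          gcongr
      _ = sdRatio d k m x := by
          rw [sdRatio, min_eq_left hle]
          field_simp
          ring
  · have hden : 0 < d + m := by linarith
    rw [sdRatio, min_eq_right hge, one_add_div hden.ne']
    exact div_le_div_of_nonneg_right (by linarith) hden.le

theorem mul_eq_min_of_eq_min_div {k t G B : ℝ} (hk : 0 < k) (ht : t = min (G / k) B) :
    k * t = min G (k * B) := by
  rw [ht, mul_min_of_nonneg _ _ hk.le, mul_div_cancel₀ _ hk.ne']

theorem natCast_div_eq_sdRatio (D k B G T : ℕ) (hT : 1 ≤ T) :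
    ((D + k * (T - 1) + min G (k * B) : ℕ) : ℝ) / ((D + min (k * min T B) G : ℕ) : ℝ) =
      sdRatio D k (min G (k * B) : ℕ) T := by
  have hden : min (k * min T B) G = min (k * T) (min G (k * B)) := by
    rw [← min_mul_mul_left, min_assoc, min_comm (k * B)]
  rw [hden, sdRatio]
  push_cast [Nat.cast_sub hT]
  rfl

theorem stmt4_general (M B G ℓ : ℕ) (hM : 2 ≤ M) (hℓ : ℓ ≤ M - 1)
    (D : ℕ)
    (fSD : ℕ → ℝ)
    (hfSD : ∀ T : ℕ, fSD T =
      ((D + (M - ℓ) * (T - 1) + min G ((M - ℓ) * B) : ℕ) : ℝ) /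
      ((D + min ((M - ℓ) * min T B) G : ℕ) : ℝ))
    (Tstar : ℕ) (hTpos : 0 < Tstar)
    (hTstar : (Tstar : ℝ) = min ((G : ℝ) / ((M : ℝ) - (ℓ : ℝ))) (B : ℝ)) :
    (∀ T : ℕ, 0 < T → fSD Tstar ≤ fSD T) ∧
    fSD Tstar = 1 + (((min G ((M - ℓ) * B) : ℕ) : ℝ) - ((M : ℝ) - (ℓ : ℝ))) /
      ((D + min G ((M - ℓ) * B) : ℕ) : ℝ) ∧
    (G ≤ (M - ℓ) * B →
      fSD Tstar = 1 + ((G : ℝ) - ((M : ℝ) - (ℓ : ℝ))) / ((D : ℝ) + (G : ℝ))) ∧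
    ((M - ℓ) * B < G →
      fSD Tstar = 1 + ((M : ℝ) - (ℓ : ℝ)) * ((B : ℝ) - 1) /
        ((D : ℝ) + ((M : ℝ) - (ℓ : ℝ)) * (B : ℝ))) := by
  set k := M - ℓ
  set m := min G (k * B)
  have hk : (M : ℝ) - ℓ = k := by push_cast [k, Nat.cast_sub (by omega : ℓ ≤ M)]; rfl
  have hkpos : 0 < k := by omega
  have hmk : k * Tstar = m := by
    have := mul_eq_min_of_eq_min_div (by positivity) (hk ▸ hTstar)
    exact_mod_cast this
  have hkm : (k : ℝ) ≤ m := by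
    rw [← hmk]; exact_mod_cast Nat.le_mul_of_pos_right k hTpos
  have hf (T : ℕ) (hT : 0 < T) : fSD T = sdRatio D k m T := by
    rw [hfSD, natCast_div_eq_sdRatio _ _ _ _ _ hT]
  have hval : fSD Tstar = 1 + (m - k) / (D + m) := by
    rw [hf _ hTpos]
    have hm : 0 < m := hmk ▸ Nat.mul_pos hkpos hTpos
    exact sdRatio_of_mul_eq (by exact_mod_cast hmk) (by positivity)
  refine ⟨fun T hT => ?_, by rw [hval, hk]; push_cast; rfl, fun hG => ?_, fun hG => ?_⟩
  · rw [hval, hf T hT]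
    exact one_add_div_le_sdRatio (by positivity) (by exact_mod_cast hkpos) hkm
      (by exact_mod_cast hT)
  · rw [hval, hk, show m = G from min_eq_left hG]
  · rw [hval, hk, show m = k * B from min_eq_right hG.le]
    push_cast
    ring

/-- The state-dependent-optimal threshold `T* = min(G/(M-ℓ), B)` minimizes the worst-case
state-dependent competitive ratio `f_SD` among all positive integer thresholds, and its
value is given by the stated closed form / case distinction. -/
theorem stmt4 (M B G ℓ : ℕ) (hM : 2 ≤ M) (hB : 1 ≤ B)
    (hBG : B < G) (hGMB : G < M * B) (hℓ : ℓ ≤ M - 1)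
    (N : ℕ → ℕ) (hN0 : N 0 = 0)
    (hNpos : ∀ n, 1 ≤ n → n ≤ ℓ → 0 < N n)
    (hNmono : ∀ i j, 1 ≤ i → i ≤ j → j ≤ ℓ → N i ≤ N j)
    (D : ℕ) (hD : D = ∑ n ∈ Finset.Icc 1 ℓ, N n)
    (fSD : ℕ → ℝ)
    (hfSD : ∀ T : ℕ, fSD T =
      ((D + (M - ℓ) * (T - 1) + min G ((M - ℓ) * B) : ℕ) : ℝ) /
      ((D + min ((M - ℓ) * min T B) G : ℕ) : ℝ))
    (Tstar : ℕ) (hTpos : 0 < Tstar)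
    (hTstar : (Tstar : ℝ) = min ((G : ℝ) / ((M : ℝ) - (ℓ : ℝ))) (B : ℝ)) :
    (∀ T : ℕ, 0 < T → fSD Tstar ≤ fSD T) ∧
    fSD Tstar = 1 + (((min G ((M - ℓ) * B) : ℕ) : ℝ) - ((M : ℝ) - (ℓ : ℝ))) /
      ((D + min G ((M - ℓ) * B) : ℕ) : ℝ) ∧
    (G ≤ (M - ℓ) * B →
      fSD Tstar = 1 + ((G : ℝ) - ((M : ℝ) - (ℓ : ℝ))) / ((D : ℝ) + (G : ℝ))) ∧
    ((M - ℓ) * B < G →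
      fSD Tstar = 1 + ((M : ℝ) - (ℓ : ℝ)) * ((B : ℝ) - 1) /
        ((D : ℝ) + ((M : ℝ) - (ℓ : ℝ)) * (B : ℝ))) :=
  stmt4_general M B G ℓ hM hℓ D fSD hfSD Tstar hTpos hTstar
end

section
/- Consider the state-aware deterministic policy that, when ℓ agents have become inactive, makes every remaining active agent rent until the threshold day ⌈min(G/(M−ℓ), B)⌉, and on that day (if reached) makes all remaining active agents buy the group pass if G/(M−ℓ) < B (splitting its cost G equally) and otherwise buy individual passes. Assume the set S := {ℓ ∈ {0,…,M−1} : N_{ℓ+1} > min(G/(M−ℓ), B)} is nonempty with ℓ* := min S, that T := min(G/(M−ℓ*), B) is a positive integer, and that N_{ℓ+1} < min(G/(M−ℓ), B) for every ℓ < ℓ*. Then under this policy the buy event occurs exactly on day T with exactly the M−ℓ* agents m > ℓ* participating; each agent m ≤ ℓ* pays total N_m, and each agent m > ℓ* pays total (T−1) + T = 2T − 1. Consequently, the individual rational competitive ratio of agent m is 1 if m ≤ ℓ* and 2 − 1/T if m > ℓ*, where the individual offline optimal cost of agent m is N_m if m ≤ ℓ* and T if m > ℓ*. -/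
/-- Under the state-aware deterministic policy with thresholds `⌈min(G/(M-ℓ), B)⌉`,
the buy event occurs exactly on day `T = min(G/(M-ℓ*), B)` with exactly the `M - ℓ*`
agents `m > ℓ*` participating; agents `m ≤ ℓ*` pay `N m` and agents `m > ℓ*` pay
`2T - 1`, so the individual rational competitive ratios are `1` and `2 - 1/T`. -/
theorem stmt5 (M B G : ℕ) (hM : 2 ≤ M) (hB : 1 ≤ B) (hBG : B < G) (hGMB : G < M * B)
    (N : ℕ → ℕ)
    (hNpos : ∀ m, 1 ≤ m → m ≤ M → 0 < N m)
    (hNmono : ∀ i j, 1 ≤ i → i ≤ j → j ≤ M → N i ≤ N j)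
    (S : Set ℕ)
    (hS : S = {ℓ | ℓ < M ∧ ((N (ℓ + 1) : ℝ)) > min ((G : ℝ) / ((M : ℝ) - (ℓ : ℝ))) (B : ℝ)})
    (hSne : S.Nonempty)
    (ℓstar : ℕ) (hℓstar : IsLeast S ℓstar)
    (T : ℕ) (hTpos : 0 < T)
    (hT : (T : ℝ) = min ((G : ℝ) / ((M : ℝ) - (ℓstar : ℝ))) (B : ℝ))
    (hbefore : ∀ ℓ, ℓ < ℓstar →
      ((N (ℓ + 1) : ℝ)) < min ((G : ℝ) / ((M : ℝ) - (ℓ : ℝ))) (B : ℝ))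
    -- number of inactive agents at the beginning of day `t`
    (lAt : ℕ → ℕ)
    (hlAt : ∀ t, lAt t = ((Finset.Icc 1 M).filter (fun m => N m < t)).card)
    -- the state-aware threshold function
    (thr : ℕ → ℕ)
    (hthr : ∀ l, thr l = ⌈min ((G : ℝ) / ((M : ℝ) - (l : ℝ))) (B : ℝ)⌉₊)
    -- total payment of each agent under the policy
    (pay : ℕ → ℝ)
    (hpay : ∀ m, pay m = if N m < T then (N m : ℝ)
        else ((T : ℝ) - 1) +
          (if (G : ℝ) / ((M : ℝ) - (ℓstar : ℝ)) < B
            then (G : ℝ) / ((M : ℝ) - (ℓstar : ℝ)) else (B : ℝ)))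
    -- individual offline optimal cost of each agent
    (indopt : ℕ → ℝ)
    (hindopt : ∀ m, indopt m = if m ≤ ℓstar then (N m : ℝ) else (T : ℝ)) :
    -- the buy event occurs exactly on day T
    (IsLeast {t : ℕ | 0 < t ∧ t = thr (lAt t)} T) ∧
    -- with exactly the M - ℓ* agents m > ℓ* participating
    (lAt T = ℓstar ∧ ∀ m, 1 ≤ m → m ≤ M → (T ≤ N m ↔ ℓstar < m)) ∧
    -- payments
    (∀ m, 1 ≤ m → m ≤ M → m ≤ ℓstar → pay m = (N m : ℝ)) ∧
    (∀ m, 1 ≤ m → m ≤ M → ℓstar < m → pay m = 2 * (T : ℝ) - 1) ∧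
    -- individual rational competitive ratios
    (∀ m, 1 ≤ m → m ≤ M →
      pay m / indopt m = if m ≤ ℓstar then 1 else 2 - 1 / (T : ℝ)) := by
  have hmem := hℓstar.1
  rw [hS] at hmem
  obtain ⟨hlM, hNgt'⟩ := hmem
  have hMl : (0:ℝ) < (M:ℝ) - (ℓstar:ℝ) := by
    have : (ℓstar:ℝ) < (M:ℝ) := by exact_mod_cast hlM
    linarith
  have hNgt : (T:ℝ) < (N (ℓstar + 1) : ℝ) := by rw [hT]; exact hNgt'
  -- key: for ℓ ≤ ℓstar, min(G/(M-ℓ),B) ≤ T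
  have hminmono : ∀ ℓ : ℕ, ℓ ≤ ℓstar →
      min ((G : ℝ) / ((M : ℝ) - (ℓ : ℝ))) (B : ℝ) ≤ (T:ℝ) := by
    intro ℓ hℓ
    rw [hT]
    apply min_le_min _ le_rfl
    apply div_le_div_of_nonneg_left (by positivity) hMl
    have : (ℓ:ℝ) ≤ (ℓstar:ℝ) := by exact_mod_cast hℓ
    linarith
  have hsmall : ∀ m, 1 ≤ m → m ≤ ℓstar → N m < T := by
    intro m h1 h2
    have h := hbefore (m - 1) (by omega)
    rw [Nat.sub_add_cancel h1] at h
    have := hminmono (m - 1) (by omega)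
    have : (N m : ℝ) < (T:ℝ) := lt_of_lt_of_le h this
    exact_mod_cast this
  have hbig : ∀ m, ℓstar < m → m ≤ M → (T:ℝ) < (N m : ℝ) := by
    intro m h1 h2
    refine lt_of_lt_of_le hNgt ?_
    exact_mod_cast hNmono (ℓstar + 1) m (by omega) h1 h2
  have hiff : ∀ m, 1 ≤ m → m ≤ M → (T ≤ N m ↔ ℓstar < m) := by
    intro m h1 h2
    constructor
    · intro hT'
      by_contra h
      push_neg at h
      exact absurd hT' (by exact_mod_cast not_le.mpr (hsmall m h1 h))
    · intro h
      have := hbig m h h2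
      have : (T:ℝ) ≤ (N m : ℝ) := this.le
      exact_mod_cast this
  -- lAt at T
  have hfilterT : ((Finset.Icc 1 M).filter (fun m => N m < T)) = Finset.Icc 1 ℓstar := by
    ext m
    simp only [Finset.mem_filter, Finset.mem_Icc]
    constructor
    · rintro ⟨⟨h1, h2⟩, h3⟩
      refine ⟨h1, ?_⟩
      by_contra h
      push_neg at h
      exact absurd ((hiff m h1 h2).mpr h) (not_le.mpr h3)
    · rintro ⟨h1, h2⟩
      exact ⟨⟨h1, by omega⟩, hsmall m h1 h2⟩
  have hlAtT : lAt T = ℓstar := by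
    rw [hlAt, hfilterT, Nat.card_Icc]; omega
  have hthrT : thr ℓstar = T := by
    rw [hthr, ← hT, Nat.ceil_natCast]
  -- the if in pay equals T
  have hifmin : (if (G : ℝ) / ((M : ℝ) - (ℓstar : ℝ)) < B
      then (G : ℝ) / ((M : ℝ) - (ℓstar : ℝ)) else (B : ℝ)) = (T:ℝ) := by
    rw [hT]
    split_ifs with h
    · exact (min_eq_left h.le).symm
    · exact (min_eq_right (not_lt.mp h)).symm
  have hpay_small : ∀ m, 1 ≤ m → m ≤ M → m ≤ ℓstar → pay m = (N m : ℝ) := by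
    intro m h1 h2 h3
    rw [hpay m, if_pos (hsmall m h1 h3)]
  have hpay_big : ∀ m, 1 ≤ m → m ≤ M → ℓstar < m → pay m = 2 * (T : ℝ) - 1 := by
    intro m h1 h2 h3
    rw [hpay m, if_neg (not_lt.mpr ((hiff m h1 h2).mpr h3)), hifmin]
    ring
  refine ⟨⟨⟨hTpos, by rw [hlAtT, hthrT]⟩, ?_⟩, ⟨hlAtT, hiff⟩, hpay_small, hpay_big, ?_⟩
  · -- lower bound
    rintro t ⟨htpos, hteq⟩
    by_contra h
    push_neg at h
    -- t < T
    have hsub : ((Finset.Icc 1 M).filter (fun m => N m < t)) ⊆ Finset.Icc 1 ℓstar := by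
      intro m hm
      simp only [Finset.mem_filter, Finset.mem_Icc] at hm ⊢
      obtain ⟨⟨h1, h2⟩, h3⟩ := hm
      refine ⟨h1, ?_⟩
      by_contra hc
      push_neg at hc
      have := (hiff m h1 h2).mpr hc
      omega
    have hle : lAt t ≤ ℓstar := by
      rw [hlAt]
      calc ((Finset.Icc 1 M).filter (fun m => N m < t)).card
          ≤ (Finset.Icc 1 ℓstar).card := Finset.card_le_card hsub
        _ = ℓstar := by rw [Nat.card_Icc]; omega
    rcases eq_or_lt_of_le hle with heq | hlt
    · rw [hteq, heq, hthrT] at h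
      omega
    · -- lAt t < ℓstar : agent (lAt t)+1 already inactive before t, contradiction
      set ℓ := lAt t with hℓdef
      have hb := hbefore ℓ hlt
      have hceil : (N (ℓ + 1) : ℝ) < (t:ℝ) := by
        have h1 : (min ((G : ℝ) / ((M : ℝ) - (ℓ : ℝ))) (B : ℝ)) ≤ ((thr ℓ : ℕ) : ℝ) := by
          rw [hthr]; exact Nat.le_ceil _
        rw [hteq] at *
        calc (N (ℓ + 1) : ℝ) < min ((G : ℝ) / ((M : ℝ) - (ℓ : ℝ))) (B : ℝ) := hb
          _ ≤ ((thr ℓ : ℕ) : ℝ) := h1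
      have hNlt : N (ℓ + 1) < t := by exact_mod_cast hceil
      have hsub2 : Finset.Icc 1 (ℓ + 1) ⊆ (Finset.Icc 1 M).filter (fun m => N m < t) := by
        intro m hm
        simp only [Finset.mem_Icc] at hm
        simp only [Finset.mem_filter, Finset.mem_Icc]
        have hmM : m ≤ M := by omega
        refine ⟨⟨hm.1, hmM⟩, ?_⟩
        have := hNmono m (ℓ + 1) hm.1 hm.2 (by omega)
        omega
      have : ℓ + 1 ≤ lAt t := by
        rw [hlAt]
        calc ℓ + 1 = (Finset.Icc 1 (ℓ + 1)).card := by rw [Nat.card_Icc]; omega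
          _ ≤ _ := Finset.card_le_card hsub2
      omega
  · -- ratios
    intro m h1 h2
    split_ifs with h
    · rw [hpay_small m h1 h2 h, hindopt m, if_pos h]
      have : (0:ℝ) < (N m : ℝ) := by exact_mod_cast hNpos m h1 h2
      field_simp
    · push_neg at h
      rw [hpay_big m h1 h2 h, hindopt m, if_neg (not_le.mpr h)]
      have hT0 : (0:ℝ) < (T:ℝ) := by exact_mod_cast hTpos
      field_simp
end

section
/- Let T' := min(G/(M−ℓ), B) (the state-dependent-optimal threshold) and suppose T' is a positive integer. Then the worst-case overall competitive ratio of the symmetric threshold policy with threshold T' is f_OV(T') = 2 + (D − (M−ℓ))/G if G ≤ (M−ℓ)B; f_OV(T') = (D + (M−ℓ)(2B−1))/G if (M−ℓ)B < G ≤ D + (M−ℓ)B; and f_OV(T') = 1 + (M−ℓ)(B−1)/(D + (M−ℓ)B) if G > D + (M−ℓ)B, where f_OV(T) := (D + (M−ℓ)(T−1) + min(G,(M−ℓ)B))/min(D + (M−ℓ)·min(T,B), G). -/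
/-!
Write `k = M - ℓ`. A positive threshold `T' = min (G / k, B)` forces `k > 0`. If `G ≤ k B` then
`T' = G / k`, so the `k` remaining agents together are active for exactly `G` days and the
denominator of `f_OV` is `G`; otherwise `T' = B`, and the denominator is `min (D + k B, G)`.
In each regime the ratio is then a rational function of `D, k, B, G` that simplifies directly.
-/

theorem pos_of_min_div_pos {G a b : ℝ} (hG : 0 ≤ G) (h : 0 < min (G / a) b) : 0 < a := by
  by_contra! ha
  exact (lt_min_iff.1 h).1.not_ge (div_nonpos_of_nonneg_of_nonpos hG ha)

section ThresholdRatio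

variable {k B G D T : ℝ}

theorem threshold_eq_of_mul_le (hk : 0 < k) (hT : T = min (G / k) B) (hG : k * B ≤ G) :
    T = B :=
  hT.trans (min_eq_right ((le_div_iff₀ hk).2 (by linarith)))

theorem threshold_ratio_of_le_mul (hk : 0 < k) (hT : T = min (G / k) B) (hTpos : 0 < T)
    (hD : 0 ≤ D) (hG : G ≤ k * B) :
    (D + k * (T - 1) + min G (k * B)) / min (D + k * min T B) G = 2 + (D - k) / G := by
  have hTG : T = G / k := by rw [hT, min_eq_left ((div_le_iff₀ hk).2 (by linarith))]
  have hGT : k * T = G := by rw [hTG, mul_div_cancel₀ _ hk.ne']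
  have hGpos : 0 < G := hGT ▸ mul_pos hk hTpos
  have hTB : T ≤ B := hT ▸ min_le_right _ _
  rw [min_eq_left hTB, min_eq_left hG, hGT, min_eq_right (by linarith)]
  field_simp
  linear_combination hGT

theorem threshold_ratio_of_mul_lt_of_le (hk : 0 < k) (hT : T = min (G / k) B)
    (hG : k * B < G) (hGD : G ≤ D + k * B) :
    (D + k * (T - 1) + min G (k * B)) / min (D + k * min T B) G = (D + k * (2 * B - 1)) / G := by
  rw [threshold_eq_of_mul_le hk hT hG.le, min_self, min_eq_right hG.le, min_eq_right hGD]
  ring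

theorem threshold_ratio_of_lt (hk : 0 < k) (hT : T = min (G / k) B) (hTpos : 0 < T)
    (hD : 0 ≤ D) (hGD : D + k * B < G) :
    (D + k * (T - 1) + min G (k * B)) / min (D + k * min T B) G =
      1 + k * (B - 1) / (D + k * B) := by
  have hTB := threshold_eq_of_mul_le hk hT (by linarith)
  have hden : 0 < D + k * B := by nlinarith
  rw [hTB, min_self, min_eq_right (by linarith), min_eq_left hGD.le]
  field_simp
  ring

end ThresholdRatio

theorem stmt7_general (M B G ℓ : ℕ)
    (D : ℕ)
    (fOV : ℕ → ℝ)
    (hfOV : ∀ T : ℕ, fOV T =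
      ((D + (M - ℓ) * (T - 1) + min G ((M - ℓ) * B) : ℕ) : ℝ) /
      ((min (D + (M - ℓ) * min T B) G : ℕ) : ℝ))
    (T' : ℕ) (hTpos : 0 < T')
    (hT' : (T' : ℝ) = min ((G : ℝ) / ((M : ℝ) - (ℓ : ℝ))) (B : ℝ)) :
    (G ≤ (M - ℓ) * B →
      fOV T' = 2 + ((D : ℝ) - ((M : ℝ) - (ℓ : ℝ))) / (G : ℝ)) ∧
    ((M - ℓ) * B < G → G ≤ D + (M - ℓ) * B →
      fOV T' = ((D : ℝ) + ((M : ℝ) - (ℓ : ℝ)) * (2 * (B : ℝ) - 1)) / (G : ℝ)) ∧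
    (D + (M - ℓ) * B < G →
      fOV T' = 1 + ((M : ℝ) - (ℓ : ℝ)) * ((B : ℝ) - 1) /
        ((D : ℝ) + ((M : ℝ) - (ℓ : ℝ)) * (B : ℝ))) := by
  have hTposR : (0 : ℝ) < T' := Nat.cast_pos.2 hTpos
  have hk : (0 : ℝ) < M - ℓ := pos_of_min_div_pos G.cast_nonneg (hT' ▸ hTposR)
  have hk' : ((M - ℓ : ℕ) : ℝ) = M - ℓ := Nat.cast_sub (by exact_mod_cast (sub_pos.1 hk).le)
  have hval : fOV T' = (D + (M - ℓ : ℝ) * (T' - 1) + min (G : ℝ) ((M - ℓ) * B)) /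
      min (D + (M - ℓ : ℝ) * min (T' : ℝ) B) G := by
    rw [hfOV]
    push_cast [hk', Nat.cast_sub hTpos]
    rfl
  rw [hval]
  refine ⟨fun hG => ?_, fun hG hGD => ?_, fun hGD => ?_⟩
  · exact threshold_ratio_of_le_mul hk hT' hTposR D.cast_nonneg (by rw [← hk']; exact_mod_cast hG)
  · exact threshold_ratio_of_mul_lt_of_le hk hT' (by rw [← hk']; exact_mod_cast hG)
      (by rw [← hk']; exact_mod_cast hGD)
  · exact threshold_ratio_of_lt hk hT' hTposR D.cast_nonneg (by rw [← hk']; exact_mod_cast hGD)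

/-- The worst-case overall competitive ratio of the symmetric threshold policy with the
state-dependent-optimal threshold `T' = min(G/(M-ℓ), B)`, in the three regimes of `G`. -/
theorem stmt7 (M B G ℓ : ℕ) (hM : 2 ≤ M) (hB : 1 ≤ B)
    (hBG : B < G) (hGMB : G < M * B) (hℓ : ℓ ≤ M - 1)
    (N : ℕ → ℕ) (hN0 : N 0 = 0)
    (hNpos : ∀ n, 1 ≤ n → n ≤ ℓ → 0 < N n)
    (hNmono : ∀ i j, 1 ≤ i → i ≤ j → j ≤ ℓ → N i ≤ N j)
    (D : ℕ) (hD : D = ∑ n ∈ Finset.Icc 1 ℓ, N n)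
    (fOV : ℕ → ℝ)
    (hfOV : ∀ T : ℕ, fOV T =
      ((D + (M - ℓ) * (T - 1) + min G ((M - ℓ) * B) : ℕ) : ℝ) /
      ((min (D + (M - ℓ) * min T B) G : ℕ) : ℝ))
    (T' : ℕ) (hTpos : 0 < T')
    (hT' : (T' : ℝ) = min ((G : ℝ) / ((M : ℝ) - (ℓ : ℝ))) (B : ℝ)) :
    (G ≤ (M - ℓ) * B →
      fOV T' = 2 + ((D : ℝ) - ((M : ℝ) - (ℓ : ℝ))) / (G : ℝ)) ∧
    ((M - ℓ) * B < G → G ≤ D + (M - ℓ) * B →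
      fOV T' = ((D : ℝ) + ((M : ℝ) - (ℓ : ℝ)) * (2 * (B : ℝ) - 1)) / (G : ℝ)) ∧
    (D + (M - ℓ) * B < G →
      fOV T' = 1 + ((M : ℝ) - (ℓ : ℝ)) * ((B : ℝ) - 1) /
        ((D : ℝ) + ((M : ℝ) - (ℓ : ℝ)) * (B : ℝ))) :=
  stmt7_general M B G ℓ D fOV hfOV T' hTpos hT'
end

section
/- In the homogeneous multi-agent ski-rental problem, suppose K := G/M is a positive integer and let c := 1/(1 − (1 − 1/K)^K). Define p_t := c · (1/K) · (1 − 1/K)^{K−t} for t ∈ {1, …, K}. Then (i) Σ_{t=1}^K p_t = 1, so (p_t) is a probability distribution over thresholds; and (ii) for every positive integer N, the expected cost Σ_{t=1}^K p_t · cost(t, N) equals c · opt(N) = c · min(M·N, G). In particular the randomized policy that samples its group-buy threshold from (p_t) has competitive ratio exactly c = 1/(1 − (1 − M/G)^{G/M}). -/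
/-- Total cost of the group-buy threshold-`t` policy on the homogeneous instance `N`. -/
def homCostG (M G t N : ℕ) : ℕ := if N < t then M * N else M * (t - 1) + G

/-!
With `x = 1/K`, give threshold `t` the unnormalised weight `x (1 - x)^(K - t)`. Both the weights
and the weighted buy-costs `M (t - 1) + G` telescope, because `x K = 1`. For `N < K` the
thresholds above `N` rent and contribute `M N (1 - (1 - x)^(K - N))`, those up to `N` buy and
contribute `M N (1 - x)^(K - N)`; for `N ≥ K` everybody buys and pays `M K = G` in total. So the
weighted cost is exactly `opt(N)`, and normalising by the total weight `1 - (1 - x)^K` gives `c`.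
-/

open Finset

theorem Icc_one_eq_Ioc_zero (K : ℕ) : Icc 1 K = Ioc 0 K := Icc_add_one_left_eq_Ioc 0 K

section GeomWeight

variable {R : Type*} [CommRing R]

def geomWeight (x : R) (K t : ℕ) : R := x * (1 - x) ^ (K - t)

theorem sum_Ioc_geomWeight (x : R) (a K : ℕ) :
    ∑ t ∈ Ioc a K, geomWeight x K t = 1 - (1 - x) ^ (K - a) := by
  have reflect : ∑ t ∈ Ioc a K, geomWeight x K t = ∑ i ∈ range (K - a), x * (1 - x) ^ i := by
    refine sum_nbij' (fun t => K - t) (fun i => K - i) ?_ ?_ ?_ ?_ fun _ _ => rfl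
    all_goals
      intro t ht
      simp only [mem_Ioc, mem_range] at ht ⊢
      omega
  rw [reflect, ← mul_sum, ← mul_neg_geom_sum, sub_sub_cancel]

theorem sum_Ioc_geomWeight_mul_buyCost {x : R} {M K : ℕ} (hx : x * K = 1) {m : ℕ}
    (hm : m ≤ K) :
    ∑ t ∈ Ioc 0 m, geomWeight x K t * ((M * (t - 1) + M * K : ℕ) : R)
      = M * m * (1 - x) ^ (K - m) := by
  induction m with
  | zero => simp
  | succ m ih =>
    rw [sum_Ioc_succ_top (Nat.zero_le m), ih (by omega), geomWeight,
      show K - m = K - (m + 1) + 1 by omega, pow_succ]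
    push_cast
    linear_combination (M : R) * (1 - x) ^ (K - (m + 1)) * hx

theorem homCostG_of_lt {M G t N : ℕ} (h : N < t) : homCostG M G t N = M * N := if_pos h

theorem homCostG_of_le {M G t N : ℕ} (h : t ≤ N) : homCostG M G t N = M * (t - 1) + G :=
  if_neg h.not_gt

theorem sum_Icc_geomWeight_mul_homCostG {x : R} {M K : ℕ} (hx : x * K = 1) (N : ℕ) :
    ∑ t ∈ Icc 1 K, geomWeight x K t * (homCostG M (M * K) t N : R) = homOpt M (M * K) N := by
  rw [Icc_one_eq_Ioc_zero]
  rcases le_total K N with hKN | hNK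
  · have buy : ∀ t ∈ Ioc 0 K, homCostG M (M * K) t N = M * (t - 1) + M * K :=
      fun t ht => homCostG_of_le ((mem_Ioc.mp ht).2.trans hKN)
    rw [sum_congr rfl fun t ht => by rw [buy t ht], sum_Ioc_geomWeight_mul_buyCost hx le_rfl,
      homOpt, min_eq_right (Nat.mul_le_mul_left M hKN)]
    simp
  · have buyers : ∑ t ∈ Ioc 0 N, geomWeight x K t * (homCostG M (M * K) t N : R)
        = M * N * (1 - x) ^ (K - N) := by
      rw [← sum_Ioc_geomWeight_mul_buyCost hx hNK]
      exact sum_congr rfl fun t ht => by rw [homCostG_of_le (mem_Ioc.mp ht).2]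
    have renters : ∑ t ∈ Ioc N K, geomWeight x K t * (homCostG M (M * K) t N : R)
        = (1 - (1 - x) ^ (K - N)) * (M * N : ℕ) := by
      rw [← sum_Ioc_geomWeight, sum_mul]
      exact sum_congr rfl fun t ht => by rw [homCostG_of_lt (mem_Ioc.mp ht).1]
    rw [← sum_Ioc_consecutive _ (Nat.zero_le N) hNK, buyers, renters, homOpt,
      min_eq_left (Nat.mul_le_mul_left M hNK)]
    push_cast
    ring

end GeomWeight

theorem stmt8_general (M G K : ℕ) (hM : 2 ≤ M)
    (hK : 0 < K) (hGK : G = M * K)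
    (c : ℝ) (hc : c = 1 / (1 - (1 - 1 / (K : ℝ)) ^ K))
    (p : ℕ → ℝ) (hp : ∀ t, p t = c * (1 / (K : ℝ)) * (1 - 1 / (K : ℝ)) ^ (K - t)) :
    (∑ t ∈ Finset.Icc 1 K, p t = 1) ∧
    (∀ N : ℕ, 0 < N →
      ∑ t ∈ Finset.Icc 1 K, p t * (homCostG M G t N : ℝ) = c * (homOpt M G N : ℝ)) ∧
    c = 1 / (1 - (1 - (M : ℝ) / (G : ℝ)) ^ K) := by
  subst hGK
  set x : ℝ := 1 / K
  have hx : x * K = 1 := one_div_mul_cancel (by positivity)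
  have hp' : ∀ t, p t = c * geomWeight x K t := fun t => by rw [hp, geomWeight, mul_assoc]
  have total : c * (1 - (1 - x) ^ K) = 1 := by
    have : (1 - x) ^ K < 1 := pow_lt_one₀
      (sub_nonneg.mpr (div_le_one_of_le₀ (by exact_mod_cast hK) (by positivity)))
      (sub_lt_self 1 (by positivity)) hK.ne'
    rw [hc]
    exact one_div_mul_cancel (sub_ne_zero.mpr this.ne')
  refine ⟨?_, fun N _ => ?_, ?_⟩
  · simp_rw [hp', ← mul_sum, Icc_one_eq_Ioc_zero, sum_Ioc_geomWeight, Nat.sub_zero, total]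
  · simp_rw [hp', mul_assoc, ← mul_sum, sum_Icc_geomWeight_mul_homCostG hx]
  · rw [hc, Nat.cast_mul, div_mul_cancel_left₀ (by positivity : (M : ℝ) ≠ 0), ← one_div]

/-- For `K = G/M` a positive integer, the distribution `p_t = c·(1/K)·(1-1/K)^{K-t}`
on `{1, …, K}` is a probability distribution, and the randomized policy sampling its
group-buy threshold from it has expected cost exactly `c · opt(N)` on every instance,
i.e. competitive ratio exactly `c = 1/(1-(1-M/G)^{G/M})`. -/
theorem stmt8 (M B G K : ℕ) (hM : 2 ≤ M) (hB : 1 ≤ B)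
    (hBG : B < G) (hGMB : G < M * B) (hK : 0 < K) (hGK : G = M * K)
    (c : ℝ) (hc : c = 1 / (1 - (1 - 1 / (K : ℝ)) ^ K))
    (p : ℕ → ℝ) (hp : ∀ t, p t = c * (1 / (K : ℝ)) * (1 - 1 / (K : ℝ)) ^ (K - t)) :
    (∑ t ∈ Finset.Icc 1 K, p t = 1) ∧
    (∀ N : ℕ, 0 < N →
      ∑ t ∈ Finset.Icc 1 K, p t * (homCostG M G t N : ℝ) = c * (homOpt M G N : ℝ)) ∧
    c = 1 / (1 - (1 - (M : ℝ) / (G : ℝ)) ^ K) :=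
  stmt8_general M G K hM hK hGK c hc p hp
end

section
/- Suppose T := min(G/(M−ℓ), B) is a positive integer with T > N_ℓ. Define g := 1/(1 − ((M−ℓ)(T−1)/(D + (M−ℓ)(N_ℓ + T))) · (1 − 1/T)^{T − N_ℓ − 1}), and define the threshold distribution p on {N_ℓ+1, …, T} by p_{N_ℓ+1} := ((D + (M−ℓ)(N_ℓ+1)) · g / (D + (M−ℓ)(N_ℓ + T))) · (1 − 1/T)^{T − N_ℓ − 1} and p_t := (g/T) · (1 − 1/T)^{T − t} for t ∈ {N_ℓ+2, …, T}. Then (i) Σ_{t=N_ℓ+1}^T p_t = 1; and (ii) for every integer N ≥ N_ℓ + 1, the expected total cost Σ_{t=N_ℓ+1}^T p_t · C(t, N) is at most g · SDOPT(N). Thus this randomized policy has state-dependent competitive ratio at most g at this state. -/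
/-!
Once `min(G, (M-ℓ)B) = (M-ℓ)T`, we have `SDOPT(n) = D + (M-ℓ)·min(n, T)`, and a threshold `t ≤ T`
cannot tell `n ≥ T` from `n = T`, so it suffices to treat `N_ℓ < n ≤ T`. There the expected cost
is exactly `g·SDOPT(n)`, by induction on `n`: going from `n` to `n+1` adds the buy cost `(M-ℓ)T` with
probability `p_{n+1} = (g/T)(1-1/T)^{T-n-1}` and one day of rent on the tail mass
`g(1 - (1-1/T)^{T-n-1})`, together exactly `(M-ℓ)g`. The weight `p_{N_ℓ+1}` is chosen to make the
base case `n = N_ℓ+1` an equality, and `g` to make the weights sum to one.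
-/

open Finset

/-- `C(t, n)` with the price `c` of buying on day `t`. -/
def thresholdCost (D m c t n : ℕ) : ℕ :=
  if n < t then D + m * n else D + m * (t - 1) + c

section Cost

variable (D m c : ℕ)

lemma thresholdCost_min_of_le {t T : ℕ} (n : ℕ) (ht : t ≤ T) :
    thresholdCost D m c t (min n T) = thresholdCost D m c t n := by
  rcases le_total n T with h | h
  · rw [min_eq_left h]
  · simp only [thresholdCost, min_eq_right h]
    split_ifs <;> omega

lemma sum_mul_thresholdCost_succ (p : ℕ → ℝ) {a T n : ℕ} (han : a ≤ n + 1)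
    (hnT : n + 1 ≤ T) :
    ∑ t ∈ Icc a T, p t * (thresholdCost D m c t (n + 1) : ℝ) =
      ∑ t ∈ Icc a T, p t * (thresholdCost D m c t n : ℝ) + c * p (n + 1)
        + m * ∑ t ∈ Ioc (n + 1) T, p t := by
  have hpoint : ∀ t ∈ Icc a T, p t * (thresholdCost D m c t (n + 1) : ℝ) =
      p t * thresholdCost D m c t n + (if t = n + 1 then c * p t else 0)
        + (if n + 1 < t then m * p t else 0) := by
    intro t ht
    rw [mem_Icc] at ht
    simp only [thresholdCost]
    split_ifs <;> first | omega | (subst_vars; push_cast; ring)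
  have hfilter : {t ∈ Icc a T | n + 1 < t} = Ioc (n + 1) T := by
    ext t; simp only [mem_filter, mem_Icc, mem_Ioc]; omega
  rw [sum_congr rfl hpoint, sum_add_distrib, sum_add_distrib, sum_ite_eq',
    if_pos (mem_Icc.mpr ⟨han, hnT⟩), ← sum_filter, hfilter, mul_sum]

end Cost

lemma sum_Ioc_pow_sub (r : ℝ) (a T : ℕ) :
    ∑ t ∈ Ioc a T, r ^ (T - t) = ∑ j ∈ range (T - a), r ^ j := by
  rw [← Ico_add_one_add_one_eq_Ioc, sum_Ico_reflect _ _ le_rfl, range_eq_Ico]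
  congr 1
  simp

lemma sum_Ioc_one_sub_inv_pow {T : ℕ} (hT : T ≠ 0) (a : ℕ) :
    ∑ t ∈ Ioc a T, (1 - 1 / (T : ℝ)) ^ (T - t) = T * (1 - (1 - 1 / (T : ℝ)) ^ (T - a)) := by
  have hT' : (T : ℝ) ≠ 0 := by exact_mod_cast hT
  rw [sum_Ioc_pow_sub, geom_sum_eq (by simpa using hT')]
  field_simp
  ring

section Policy

variable {D m L T : ℕ} {g : ℝ} {p : ℕ → ℝ}

lemma sum_Ioc_eq_of_geometric (hT : T ≠ 0)
    (hp : ∀ t, L + 2 ≤ t → t ≤ T → p t = g / T * (1 - 1 / (T : ℝ)) ^ (T - t))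
    {a : ℕ} (ha : L + 1 ≤ a) :
    ∑ t ∈ Ioc a T, p t = g * (1 - (1 - 1 / (T : ℝ)) ^ (T - a)) := by
  have hT' : (T : ℝ) ≠ 0 := by exact_mod_cast hT
  rw [sum_congr rfl fun t ht => hp t (by grind) (mem_Ioc.mp ht).2, ← mul_sum,
    sum_Ioc_one_sub_inv_pow hT]
  field_simp

lemma sum_eq_one_of_geometric (hT : T ≠ 0)
    (hp : ∀ t, L + 2 ≤ t → t ≤ T → p t = g / T * (1 - 1 / (T : ℝ)) ^ (T - t))
    (hp1 : p (L + 1) = (D + m * (L + 1)) * g / (D + m * (L + T))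
      * (1 - 1 / (T : ℝ)) ^ (T - L - 1))
    (hden : (D : ℝ) + m * (L + T) ≠ 0) (hLT : L < T)
    (hg : g * (1 - m * (T - 1) / (D + m * (L + T)) * (1 - 1 / (T : ℝ)) ^ (T - L - 1)) = 1) :
    ∑ t ∈ Icc (L + 1) T, p t = 1 := by
  rw [Icc_eq_cons_Ioc hLT, sum_cons, sum_Ioc_eq_of_geometric hT hp le_rfl, hp1,
    show T - (L + 1) = T - L - 1 by omega]
  field_simp at hg ⊢
  linear_combination hg

lemma sum_mul_thresholdCost_eq (hT : T ≠ 0)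
    (hp : ∀ t, L + 2 ≤ t → t ≤ T → p t = g / T * (1 - 1 / (T : ℝ)) ^ (T - t))
    (hp1 : p (L + 1) = (D + m * (L + 1)) * g / (D + m * (L + T))
      * (1 - 1 / (T : ℝ)) ^ (T - L - 1))
    (hden : (D : ℝ) + m * (L + T) ≠ 0) {n : ℕ} (hLn : L + 1 ≤ n) (hnT : n ≤ T) :
    ∑ t ∈ Icc (L + 1) T, p t * (thresholdCost D m (m * T) t n : ℝ) = g * (D + m * n) := by
  have hT' : (T : ℝ) ≠ 0 := by exact_mod_cast hT
  induction n, hLn using Nat.le_induction with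
  | base =>
    have hcost : ∀ t ∈ Ioc (L + 1) T, p t * (thresholdCost D m (m * T) t (L + 1) : ℝ) =
        (D + m * (L + 1) : ℕ) * p t := by
      intro t ht
      rw [thresholdCost, if_pos (mem_Ioc.mp ht).1, mul_comm]
    rw [Icc_eq_cons_Ioc (by omega), sum_cons, sum_congr rfl hcost, ← mul_sum,
      sum_Ioc_eq_of_geometric hT hp le_rfl, hp1, thresholdCost, if_neg (lt_irrefl _),
      show T - (L + 1) = T - L - 1 by omega, Nat.add_sub_cancel]
    push_cast
    field_simp
    ring
  | succ n hLn ih =>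
    rw [sum_mul_thresholdCost_succ _ _ _ _ (by omega) hnT, ih (by omega),
      sum_Ioc_eq_of_geometric hT hp (by omega), hp (n + 1) (by omega) hnT]
    push_cast
    field_simp
    ring

lemma sum_mul_thresholdCost_eq_min (hT : T ≠ 0)
    (hp : ∀ t, L + 2 ≤ t → t ≤ T → p t = g / T * (1 - 1 / (T : ℝ)) ^ (T - t))
    (hp1 : p (L + 1) = (D + m * (L + 1)) * g / (D + m * (L + T))
      * (1 - 1 / (T : ℝ)) ^ (T - L - 1))
    (hden : (D : ℝ) + m * (L + T) ≠ 0) (hLT : L < T) {n : ℕ}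
    (hLn : L + 1 ≤ n) :
    ∑ t ∈ Icc (L + 1) T, p t * (thresholdCost D m (m * T) t n : ℝ) =
      g * (D + m * min n T) := by
  rw [← sum_mul_thresholdCost_eq hT hp hp1 hden (le_min hLn hLT) (min_le_right n T)]
  refine sum_congr rfl fun t ht => ?_
  rw [thresholdCost_min_of_le _ _ _ _ (mem_Icc.mp ht).2]

end Policy

lemma mul_div_mul_one_sub_inv_pow_lt_one {D m L T : ℕ} (hm : 0 < m) (hT : T ≠ 0) (k : ℕ) :
    (m : ℝ) * (T - 1) / (D + m * (L + T)) * (1 - 1 / (T : ℝ)) ^ k < 1 := by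
  have hT1 : (1 : ℝ) ≤ T := by exact_mod_cast Nat.one_le_iff_ne_zero.mpr hT
  have hm' : (0 : ℝ) < m := by exact_mod_cast hm
  have hratio_nonneg : 0 ≤ (m : ℝ) * (T - 1) / (D + m * (L + T)) :=
    div_nonneg (mul_nonneg hm'.le (by linarith)) (by positivity)
  have hratio_lt : (m : ℝ) * (T - 1) / (D + m * (L + T)) < 1 := by
    rw [div_lt_one (by positivity)]
    nlinarith [(D.cast_nonneg : (0 : ℝ) ≤ D), (L.cast_nonneg : (0 : ℝ) ≤ L)]
  have hpow : (1 - 1 / (T : ℝ)) ^ k ≤ 1 :=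
    pow_le_one₀ (by rw [sub_nonneg, div_le_one (by linarith)]; exact hT1) (by simp)
  exact (mul_le_of_le_one_right hratio_nonneg hpow).trans_lt hratio_lt

lemma min_mul_eq_mul_of_eq_min {m B G T : ℕ} (hm : 0 < m) (hT : (T : ℝ) = min ((G : ℝ) / m) B) :
    min G (m * B) = m * T := by
  have hm' : (m : ℝ) ≠ 0 := by positivity
  have : (m : ℝ) * T = min (G : ℝ) (m * B) := by
    rw [hT, mul_min_of_nonneg _ _ (Nat.cast_nonneg m), mul_div_cancel₀ _ hm']
  exact_mod_cast this.symm

lemma min_mul_min_eq_mul_min {m n B G T : ℕ} (h : min G (m * B) = m * T) :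
    min (m * min n B) G = m * min n T := by
  rw [← Nat.mul_min_mul_left, min_assoc, min_comm _ G, h, Nat.mul_min_mul_left]

theorem stmt10_general (M B G ℓ : ℕ) (hM : 2 ≤ M) (hℓ : ℓ ≤ M - 1)
    (N : ℕ → ℕ) (D : ℕ) (T : ℕ) (hTN : N ℓ < T)
    (hT : (T : ℝ) = min ((G : ℝ) / ((M : ℝ) - (ℓ : ℝ))) (B : ℝ))
    (g : ℝ)
    (hg : g = 1 / (1 - (((M - ℓ : ℕ) : ℝ) * ((T : ℝ) - 1) /
        ((D : ℝ) + ((M - ℓ : ℕ) : ℝ) * ((N ℓ : ℝ) + (T : ℝ))))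
        * (1 - 1 / (T : ℝ)) ^ (T - N ℓ - 1)))
    (p : ℕ → ℝ)
    (hp1 : p (N ℓ + 1) = (((D : ℝ) + ((M - ℓ : ℕ) : ℝ) * ((N ℓ : ℝ) + 1)) * g /
        ((D : ℝ) + ((M - ℓ : ℕ) : ℝ) * ((N ℓ : ℝ) + (T : ℝ))))
        * (1 - 1 / (T : ℝ)) ^ (T - N ℓ - 1))
    (hp2 : ∀ t, N ℓ + 2 ≤ t → t ≤ T →
      p t = (g / (T : ℝ)) * (1 - 1 / (T : ℝ)) ^ (T - t)) :
    (∑ t ∈ Finset.Icc (N ℓ + 1) T, p t = 1) ∧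
    (∀ n : ℕ, N ℓ + 1 ≤ n →
      ∑ t ∈ Finset.Icc (N ℓ + 1) T, p t *
        ((if n < t then D + (M - ℓ) * n
          else D + (M - ℓ) * (t - 1) + min G ((M - ℓ) * B) : ℕ) : ℝ)
      ≤ g * ((D + min ((M - ℓ) * min n B) G : ℕ) : ℝ)) := by
  set m := M - ℓ
  have hm : 0 < m := by omega
  have hT0 : T ≠ 0 := by omega
  rw [← Nat.cast_sub (by omega)] at hT
  have hc : min G (m * B) = m * T := min_mul_eq_mul_of_eq_min hm hT
  have hden : (D : ℝ) + m * (N ℓ + T) ≠ 0 := by positivity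
  have hg' : g * (1 - m * (T - 1) / (D + m * (N ℓ + T)) * (1 - 1 / (T : ℝ)) ^ (T - N ℓ - 1))
      = 1 := by
    rw [hg]
    exact one_div_mul_cancel (sub_ne_zero.mpr (mul_div_mul_one_sub_inv_pow_lt_one hm hT0 _).ne')
  refine ⟨sum_eq_one_of_geometric hT0 hp2 hp1 hden hTN hg', fun n hn => le_of_eq ?_⟩
  rw [hc, min_mul_min_eq_mul_min hc, Nat.cast_add, Nat.cast_mul]
  exact sum_mul_thresholdCost_eq_min hT0 hp2 hp1 hden hTN hn

/-- The randomized policy sampling its threshold from the distribution `p` on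
`{N_ℓ+1, …, T}` with `T = min(G/(M-ℓ), B)` is a probability distribution whose
expected total cost is at most `g · SDOPT(N)` for every instance `N ≥ N_ℓ + 1`:
state-dependent competitive ratio at most `g`. -/
theorem stmt10 (M B G ℓ : ℕ) (hM : 2 ≤ M) (hB : 1 ≤ B)
    (hBG : B < G) (hGMB : G < M * B) (hℓ : ℓ ≤ M - 1)
    (N : ℕ → ℕ) (hN0 : N 0 = 0)
    (hNpos : ∀ n, 1 ≤ n → n ≤ ℓ → 0 < N n)
    (hNmono : ∀ i j, 1 ≤ i → i ≤ j → j ≤ ℓ → N i ≤ N j)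
    (D : ℕ) (hD : D = ∑ n ∈ Finset.Icc 1 ℓ, N n)
    (T : ℕ) (hTpos : 0 < T) (hTN : N ℓ < T)
    (hT : (T : ℝ) = min ((G : ℝ) / ((M : ℝ) - (ℓ : ℝ))) (B : ℝ))
    (g : ℝ)
    (hg : g = 1 / (1 - (((M - ℓ : ℕ) : ℝ) * ((T : ℝ) - 1) /
        ((D : ℝ) + ((M - ℓ : ℕ) : ℝ) * ((N ℓ : ℝ) + (T : ℝ))))
        * (1 - 1 / (T : ℝ)) ^ (T - N ℓ - 1)))
    (p : ℕ → ℝ)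
    (hp1 : p (N ℓ + 1) = (((D : ℝ) + ((M - ℓ : ℕ) : ℝ) * ((N ℓ : ℝ) + 1)) * g /
        ((D : ℝ) + ((M - ℓ : ℕ) : ℝ) * ((N ℓ : ℝ) + (T : ℝ))))
        * (1 - 1 / (T : ℝ)) ^ (T - N ℓ - 1))
    (hp2 : ∀ t, N ℓ + 2 ≤ t → t ≤ T →
      p t = (g / (T : ℝ)) * (1 - 1 / (T : ℝ)) ^ (T - t)) :
    (∑ t ∈ Finset.Icc (N ℓ + 1) T, p t = 1) ∧
    (∀ n : ℕ, N ℓ + 1 ≤ n →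
      ∑ t ∈ Finset.Icc (N ℓ + 1) T, p t *
        ((if n < t then D + (M - ℓ) * n
          else D + (M - ℓ) * (t - 1) + min G ((M - ℓ) * B) : ℕ) : ℝ)
      ≤ g * ((D + min ((M - ℓ) * min n B) G : ℕ) : ℝ)) :=
  stmt10_general M B G ℓ hM hℓ N D T hTN hT g hg p hp1 hp2
end

section
/- For every real t ≥ 0, ∫_0^t n·e^{−n} dn + (t+1)·e^{−t} = 1; and ∫_0^1 n·e^{−n} dn + e^{−1} = 1 − e^{−1}. Equivalently: against the adversary density g(n) = e^{−n} on [0,∞), the expected cost of the threshold-t policy equals 1 for every t ≥ 0, and the expected offline optimal cost equals 1 − 1/e. -/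
open MeasureTheory Set Real

/-!
`-(n + 1) e^{-n}` is an antiderivative of `n e^{-n}`, so the threshold-`t` policy pays
`∫_0^t n e^{-n} dn = 1 - (t + 1) e^{-t}` on the event `n < t`, while on `n ≥ t` it pays
`t + 1` with probability `e^{-t}`; the two `(t + 1) e^{-t}` terms cancel.
-/

theorem hasDerivAt_neg_add_one_mul_exp_neg (x : ℝ) :
    HasDerivAt (fun n : ℝ => -(n + 1) * exp (-n)) (x * exp (-x)) x := by
  have h : HasDerivAt (fun n : ℝ => -(n + 1)) (-1) x := ((hasDerivAt_id' x).add_const 1).neg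
  exact (h.mul (hasDerivAt_neg x).exp).congr_deriv (by ring)

theorem intervalIntegral_mul_exp_neg (a b : ℝ) :
    ∫ n in a..b, n * exp (-n) = (a + 1) * exp (-a) - (b + 1) * exp (-b) := by
  rw [intervalIntegral.integral_eq_sub_of_hasDerivAt
    (fun x _ => hasDerivAt_neg_add_one_mul_exp_neg x)
    ((by fun_prop : Continuous fun n : ℝ => n * exp (-n)).intervalIntegrable a b)]
  ring

theorem integrableOn_Ioi_exp_neg (a : ℝ) : IntegrableOn (fun n : ℝ => exp (-n)) (Ioi a) := by
  simpa using exp_neg_integrableOn_Ioi a one_pos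

theorem integral_Ioi_mul_exp_neg_of_eqOn {f : ℝ → ℝ} {a t c : ℝ} (hat : a ≤ t)
    (hf_lt : EqOn f id (Ioo a t)) (hf_ge : EqOn f (fun _ => c) (Ici t)) :
    ∫ n in Ioi a, f n * exp (-n) = (a + 1) * exp (-a) - (t + 1) * exp (-t) + c * exp (-t) := by
  have h_lt : EqOn (fun n => f n * exp (-n)) (fun n => n * exp (-n)) (Ioo a t) :=
    fun n hn => by simp [hf_lt hn]
  have h_ge : EqOn (fun n => f n * exp (-n)) (fun n => c * exp (-n)) (Ioi t) :=
    fun n hn => by simp [hf_ge (mem_Ici_of_Ioi hn)]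
  have hint_lt : IntegrableOn (fun n => f n * exp (-n)) (Ioc a t) := by
    rw [integrableOn_Ioc_iff_integrableOn_Ioo]
    exact ((Continuous.integrableOn_Icc (by fun_prop)).mono_set Ioo_subset_Icc_self).congr_fun
      h_lt.symm measurableSet_Ioo
  have hint_ge : IntegrableOn (fun n => f n * exp (-n)) (Ioi t) :=
    IntegrableOn.congr_fun ((integrableOn_Ioi_exp_neg t).const_mul c) h_ge.symm measurableSet_Ioi
  calc ∫ n in Ioi a, f n * exp (-n)
      = (∫ n in Ioc a t, f n * exp (-n)) + ∫ n in Ioi t, f n * exp (-n) := by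
        rw [← setIntegral_union Ioc_disjoint_Ioi_same measurableSet_Ioi hint_lt hint_ge,
          Ioc_union_Ioi_eq_Ioi hat]
    _ = (∫ n in a..t, n * exp (-n)) + ∫ n in Ioi t, c * exp (-n) := by
        rw [integral_Ioc_eq_integral_Ioo, setIntegral_congr_fun measurableSet_Ioo h_lt,
          setIntegral_congr_fun measurableSet_Ioi h_ge, intervalIntegral.integral_of_le hat,
          integral_Ioc_eq_integral_Ioo]
    _ = _ := by
        rw [intervalIntegral_mul_exp_neg, integral_const_mul, integral_exp_neg_Ioi]

/-- Against the exponential adversary density `e^{-n}` on `[0, ∞)`, the expected cost of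
the threshold-`t` policy equals `1` for every `t ≥ 0`, and the expected offline optimal
cost equals `1 - 1/e`. -/
theorem stmt12 :
    (∀ t : ℝ, 0 ≤ t →
      (∫ n in (0 : ℝ)..t, n * Real.exp (-n)) + (t + 1) * Real.exp (-t) = 1) ∧
    ((∫ n in (0 : ℝ)..(1 : ℝ), n * Real.exp (-n)) + Real.exp (-1) = 1 - Real.exp (-1)) ∧
    (∀ t : ℝ, 0 ≤ t →
      (∫ n in Set.Ioi (0 : ℝ), (if n < t then n else t + 1) * Real.exp (-n)) = 1) ∧
    ((∫ n in Set.Ioi (0 : ℝ), min n 1 * Real.exp (-n)) = 1 - Real.exp (-1)) := by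
  refine ⟨fun t _ => ?_, ?_, fun t ht => ?_, ?_⟩
  · rw [intervalIntegral_mul_exp_neg, neg_zero, exp_zero]; ring
  · rw [intervalIntegral_mul_exp_neg, neg_zero, exp_zero]; ring
  · refine (integral_Ioi_mul_exp_neg_of_eqOn ht (fun n hn => if_pos hn.2)
      (fun n hn => if_neg (not_lt.mpr hn))).trans ?_
    rw [neg_zero, exp_zero]; ring
  · refine (integral_Ioi_mul_exp_neg_of_eqOn zero_le_one (fun n hn => min_eq_left hn.2.le)
      (fun n hn => min_eq_right hn)).trans ?_
    rw [neg_zero, exp_zero]; ring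
end

section
/- For every probability measure μ on [0, ∞) (a randomized choice of buy-threshold t), the worst-case competitive ratio satisfies sup over n > 0 of (∫ c(t, n) dμ(t)) / min(n, 1) ≥ e/(e − 1). Hence no randomized threshold policy in the continuous model achieves competitive ratio better than e/(e−1). -/
/-!
Yao's principle with the exponential adversary: let the number of active days `n` have
density `e^{-n}` on `(0, ∞)`. Every deterministic threshold `t ≥ 0` then has expected cost
exactly `1`, while the expected offline optimum is `∫ min(n, 1) e^{-n} dn = 1 - e^{-1}`.
Averaging the hypothesis `∫ c(t, n) dμ(t) ≤ r · min(n, 1)` against `e^{-n}` and exchanging the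
order of integration (Fubini) gives `1 ≤ r (1 - e^{-1})`, i.e. `r ≥ e / (e - 1)`.
-/

open MeasureTheory Set Real

lemma integrableOn_Ioi_mul_exp_neg : IntegrableOn (fun x : ℝ => x * exp (-x)) (Ioi 0) :=
  (GammaIntegral_convergent two_pos).congr_fun (fun x _ => by norm_num [mul_comm])
    measurableSet_Ioi

lemma integrableOn_Ioi_mul_exp_neg_of_abs_le {f : ℝ → ℝ}
    (hf : AEStronglyMeasurable f (volume.restrict (Ioi 0))) (a : ℝ)
    (hfa : ∀ x, 0 < x → |f x| ≤ x + a) :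
    IntegrableOn (fun x => f x * exp (-x)) (Ioi 0) := by
  refine (integrableOn_Ioi_mul_exp_neg.add ((integrableOn_exp_neg_Ioi 0).const_mul a)).mono'
    (hf.mul (by fun_prop)) ?_
  filter_upwards [ae_restrict_mem measurableSet_Ioi] with x hx
  rw [norm_mul, norm_of_nonneg (exp_pos _).le, Real.norm_eq_abs, Pi.add_apply, ← add_mul]
  exact mul_le_mul_of_nonneg_right (hfa x hx) (exp_pos _).le

lemma integral_mul_exp_neg (t : ℝ) :
    ∫ x in (0 : ℝ)..t, x * exp (-x) = 1 - (t + 1) * exp (-t) := by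
  have hderiv (x : ℝ) : HasDerivAt (fun y => -((y + 1) * exp (-y))) (x * exp (-x)) x := by
    refine (((hasDerivAt_id x).add_const 1).mul (hasDerivAt_neg x).exp).neg.congr_deriv ?_
    simp only [id_eq]; ring
  have hcont : Continuous fun x : ℝ => x * exp (-x) := by fun_prop
  rw [intervalIntegral.integral_eq_sub_of_hasDerivAt (fun x _ => hderiv x)
    (hcont.intervalIntegrable 0 t)]
  simp only [neg_zero, exp_zero]; ring

lemma integral_Ioi_ite_lt_mul_exp_neg {t : ℝ} (ht : 0 ≤ t) (a : ℝ) :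
    ∫ x in Ioi 0, (if x < t then x else a) * exp (-x) = 1 - (t + 1 - a) * exp (-t) := by
  have hint : IntegrableOn (fun x => (if x < t then x else a) * exp (-x)) (Ioi 0) := by
    refine integrableOn_Ioi_mul_exp_neg_of_abs_le
      (measurable_id.ite measurableSet_Iio measurable_const).aestronglyMeasurable |a| ?_
    intro x hx
    split_ifs
    · rw [abs_of_pos hx]; linarith [abs_nonneg a]
    · linarith
  rw [← Ioc_union_Ioi_eq_Ioi ht, setIntegral_union (Ioc_disjoint_Ioi le_rfl) measurableSet_Ioi
    (hint.mono_set Ioc_subset_Ioi_self) (hint.mono_set (Ioi_subset_Ioi ht))]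
  have h_rent : ∫ x in Ioc 0 t, (if x < t then x else a) * exp (-x)
      = 1 - (t + 1) * exp (-t) := by
    rw [integral_Ioc_eq_integral_Ioo,
      setIntegral_congr_fun measurableSet_Ioo (g := fun x => x * exp (-x))
        (fun x hx => by simp [hx.2]),
      ← integral_Ioc_eq_integral_Ioo, ← intervalIntegral.integral_of_le ht,
      integral_mul_exp_neg]
  have h_buy : ∫ x in Ioi t, (if x < t then x else a) * exp (-x) = a * exp (-t) := by
    rw [setIntegral_congr_fun measurableSet_Ioi (g := fun x => a * exp (-x))
        (fun x hx => by simp [not_lt.mpr (mem_Ioi.mp hx).le]),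
      integral_const_mul, integral_exp_neg_Ioi]
  rw [h_rent, h_buy]; ring

lemma integral_Ioi_min_one_mul_exp_neg :
    ∫ x in Ioi 0, min x 1 * exp (-x) = 1 - exp (-1) := by
  have hmin (x : ℝ) : min x 1 = if x < 1 then x else 1 := by
    split_ifs with h
    · exact min_eq_left h.le
    · exact min_eq_right (not_lt.mp h)
  simp_rw [hmin, integral_Ioi_ite_lt_mul_exp_neg zero_le_one]
  ring

lemma abs_threshold_cost_le {t n : ℝ} (ht : 0 ≤ t) (hn : 0 < n) :
    |if n < t then n else t + 1| ≤ n + 1 := by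
  split_ifs with h
  · rw [abs_of_pos hn]; linarith
  · rw [abs_of_nonneg (by linarith)]; linarith

lemma integrable_prod_threshold_cost_mul_exp_neg (μ : Measure ℝ) [IsFiniteMeasure μ]
    (hμ : ∀ᵐ t ∂μ, 0 ≤ t) :
    Integrable (fun p : ℝ × ℝ => (if p.2 < p.1 then p.2 else p.1 + 1) * exp (-p.2))
      (μ.prod (volume.restrict (Ioi 0))) := by
  have hbound := (integrableOn_Ioi_mul_exp_neg.add (integrableOn_exp_neg_Ioi 0)).comp_snd μ
  have hmeas : Measurable fun p : ℝ × ℝ => if p.2 < p.1 then p.2 else p.1 + 1 :=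
    Measurable.ite (measurableSet_lt measurable_snd measurable_fst) measurable_snd
      (measurable_fst.add_const 1)
  refine hbound.mono' (hmeas.mul (by fun_prop)).aestronglyMeasurable ?_
  filter_upwards [Measure.quasiMeasurePreserving_fst.ae hμ,
    Measure.quasiMeasurePreserving_snd.ae (ae_restrict_mem measurableSet_Ioi)]
    with p ht hn
  rw [norm_mul, norm_of_nonneg (exp_pos _).le, Real.norm_eq_abs, Pi.add_apply, ← add_one_mul]
  exact mul_le_mul_of_nonneg_right (abs_threshold_cost_le ht hn) (exp_pos _).le

lemma one_le_mul_one_sub_exp_neg_one_of_threshold_cost_le (μ : Measure ℝ)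
    [IsProbabilityMeasure μ] (hμ : ∀ᵐ t ∂μ, 0 ≤ t) (r : ℝ)
    (hr : ∀ n : ℝ, 0 < n → (∫ t, (if n < t then n else t + 1) ∂μ) ≤ r * min n 1) :
    1 ≤ r * (1 - exp (-1)) := by
  set ν := volume.restrict (Ioi (0 : ℝ))
  have hF := integrable_prod_threshold_cost_mul_exp_neg μ hμ
  have h_policy : ∫ t, ∫ n, (if n < t then n else t + 1) * exp (-n) ∂ν ∂μ = 1 := by
    rw [integral_congr_ae (g := fun _ => (1 : ℝ)) ?_, integral_const, probReal_univ, one_smul]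
    filter_upwards [hμ] with t ht
    rw [integral_Ioi_ite_lt_mul_exp_neg ht]
    ring
  calc (1 : ℝ) = ∫ n, ∫ t, (if n < t then n else t + 1) * exp (-n) ∂μ ∂ν :=
        h_policy.symm.trans (integral_integral_swap hF)
    _ ≤ ∫ n, r * (min n 1 * exp (-n)) ∂ν := by
        refine integral_mono_ae hF.integral_prod_right ?_ ?_
        · exact (integrableOn_Ioi_mul_exp_neg_of_abs_le (by fun_prop) 0 fun x hx => by
            rw [abs_of_pos (lt_min hx one_pos)]; linarith [min_le_left x 1]).const_mul r
        filter_upwards [ae_restrict_mem measurableSet_Ioi] with n hn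
        rw [integral_mul_const, ← mul_assoc]
        exact mul_le_mul_of_nonneg_right (hr n hn) (exp_pos _).le
    _ = r * (1 - exp (-1)) := by rw [integral_const_mul, integral_Ioi_min_one_mul_exp_neg]

/-- Lower bound for randomized threshold policies in the continuous ski-rental model:
any ratio `r` that upper-bounds the expected cost of a randomized threshold `μ` against
`opt(n) = min(n, 1)` for all `n > 0` must satisfy `r ≥ e/(e-1)`. -/
theorem stmt13 (μ : Measure ℝ) (hprob : IsProbabilityMeasure μ)
    (hsupp : μ {t : ℝ | t < 0} = 0) (r : ℝ)
    (hr : ∀ n : ℝ, 0 < n →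
      (∫ t, (if n < t then n else t + 1) ∂μ) ≤ r * min n 1) :
    Real.exp 1 / (Real.exp 1 - 1) ≤ r := by
  have hμ : ∀ᵐ t ∂μ, 0 ≤ t := by
    rw [ae_iff]; simpa only [not_le] using hsupp
  have h := one_le_mul_one_sub_exp_neg_one_of_threshold_cost_le μ hμ r hr
  have he : 1 < exp 1 := one_lt_exp_iff.mpr one_pos
  have hexp : exp (-1) * exp 1 = 1 := by rw [← exp_add]; norm_num
  rw [div_le_iff₀ (by linarith)]
  linear_combination exp 1 * h - r * hexp
end

section
/- With two agents and B < G ≤ 2B, for all positive integers i ≤ j and every positive integer N: cost_asym(i, j, N) ≥ (cost_grp(i, N) + cost_grp(j, N))/2, where cost_asym(i, j, N) := min(N, i−1) + B·𝟙[N ≥ i] + min(N, j−1) + B·𝟙[N ≥ j] is the total cost on the homogeneous instance (N, N) of the asymmetric policy in which agent 1 buys an individual pass at day i and agent 2 at day j, and cost_grp(k, N) := 2·min(N, k−1) + G·𝟙[N ≥ k] is the total cost of the symmetric policy in which both agents buy the group pass together at day k. Hence on homogeneous instances every asymmetric individual-buy randomized policy is dominated by a mixture of symmetric group-buy policies. 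-/
/-- Total cost on the homogeneous instance `(N, N)` of the asymmetric policy in which
agent 1 buys an individual pass at day `i` and agent 2 at day `j`. -/
def costAsym (B i j N : ℕ) : ℕ :=
  min N (i - 1) + (if i ≤ N then B else 0) + min N (j - 1) + (if j ≤ N then B else 0)

/-- Total cost on the homogeneous instance `(N, N)` of the symmetric policy in which
both agents buy the group pass together at day `k`. -/
def costGrp (G k N : ℕ) : ℕ := 2 * min N (k - 1) + (if k ≤ N then G else 0)

/-- With two agents and `B < G ≤ 2B`, every asymmetric individual-buy policy is
dominated on homogeneous instances by the average of two symmetric group-buy policies. -/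
theorem stmt14 (B G : ℕ) (hB : 1 ≤ B) (hBG : B < G) (hG2B : G ≤ 2 * B) :
    ∀ i j N : ℕ, 1 ≤ i → i ≤ j → 1 ≤ N →
      ((costGrp G i N : ℝ) + (costGrp G j N : ℝ)) / 2 ≤ (costAsym B i j N : ℝ) := by
  intro i j N hi hij hN
  have hg : (G:ℝ) ≤ 2*B := by exact_mod_cast hG2B
  simp only [costAsym, costGrp]
  by_cases h1 : i ≤ N <;> by_cases h2 : j ≤ N <;>
    simp [h1, h2] <;> push_cast <;> linarith
end

section
/- For all positive integers T and N (with N, T > N_ℓ), the instance in which all remaining agents have exactly T active days is a worst case for the symmetric threshold-T policy against the overall optimum: C(T, N) · OVOPT(T) ≤ C(T, T) · OVOPT(N), i.e., C(T, N)/OVOPT(N) ≤ C(T, T)/OVOPT(T). -/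
/-- Total cost of the symmetric threshold-`T` policy at the state with `ℓ` inactive
agents of total paid cost `D`, on the instance where every remaining agent has `n`
active days. -/
def thrCost (M B G ℓ D T n : ℕ) : ℕ :=
  if n < T then D + (M - ℓ) * n else D + (M - ℓ) * (T - 1) + min G ((M - ℓ) * B)

/-- Overall offline optimum at that state on instance `n`. -/
def ovOpt (M B G ℓ D n : ℕ) : ℕ := min (D + (M - ℓ) * min n B) G

/-!
Write `k = M - ℓ`. If `n ≥ T` the policy pays the same on `n` as on `T`, while the optimum can
only grow. If `n < T` the policy pays `D + k n`, at most its cost `C` on `T`; when moreover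
`n ≥ B` the two optima agree, and when `n < B` the optimum on `n` is `min (D + k n) G`, so the
claim reduces to `a * x ≤ C * min a G` for `a = D + k n` and `x = OPT(T)`, which holds because
`OPT(T) ≤ min C G`.
-/

lemma mul_le_mul_min_of_le {a c x g : ℕ} (hac : a ≤ c) (hxc : x ≤ c) (hxg : x ≤ g) :
    a * x ≤ c * min a g := by
  rcases le_total a g with hag | hga
  · rw [min_eq_left hag, mul_comm c]
    exact Nat.mul_le_mul_left a hxc
  · rw [min_eq_right hga]
    exact Nat.mul_le_mul hac hxg

section

variable (M B G ℓ D : ℕ)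

lemma ovOpt_mono : Monotone (ovOpt M B G ℓ D) := fun _ _ h =>
  min_le_min_right G (Nat.add_le_add_left (Nat.mul_le_mul_left _ (min_le_min_right B h)) D)

lemma ovOpt_of_le {n : ℕ} (h : B ≤ n) : ovOpt M B G ℓ D n = min (D + (M - ℓ) * B) G := by
  rw [ovOpt, min_eq_right h]

lemma ovOpt_of_lt {n : ℕ} (h : n < B) : ovOpt M B G ℓ D n = min (D + (M - ℓ) * n) G := by
  rw [ovOpt, min_eq_left h.le]

lemma thrCost_of_lt {T n : ℕ} (h : n < T) : thrCost M B G ℓ D T n = D + (M - ℓ) * n := if_pos h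

lemma thrCost_of_le {T n : ℕ} (h : T ≤ n) :
    thrCost M B G ℓ D T n = thrCost M B G ℓ D T T := by
  rw [thrCost, thrCost, if_neg h.not_gt, if_neg (lt_irrefl T)]

lemma thrCost_le_thrCost_self (T n : ℕ) : thrCost M B G ℓ D T n ≤ thrCost M B G ℓ D T T := by
  rcases lt_or_ge n T with h | h
  · rw [thrCost_of_lt M B G ℓ D h, thrCost, if_neg (lt_irrefl T)]
    have : (M - ℓ) * n ≤ (M - ℓ) * (T - 1) := Nat.mul_le_mul_left _ (Nat.le_sub_one_of_lt h)
    omega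
  · rw [thrCost_of_le M B G ℓ D h]

lemma ovOpt_le_thrCost_self (T : ℕ) : ovOpt M B G ℓ D T ≤ thrCost M B G ℓ D T T := by
  have hopt : ovOpt M B G ℓ D T ≤ min (D + (M - ℓ) * B) G :=
    (ovOpt_mono M B G ℓ D (le_max_left T B)).trans_eq (ovOpt_of_le M B G ℓ D (le_max_right T B))
  rw [thrCost, if_neg (lt_irrefl T)]
  rcases le_total G ((M - ℓ) * B) with hG | hG
  · rw [min_eq_left hG]
    omega
  · rw [min_eq_right hG]
    omega

end

theorem stmt16_general (M B G ℓ : ℕ)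
    (N : ℕ → ℕ)
    (D : ℕ) :
    ∀ T n : ℕ, N ℓ < T → N ℓ < n →
      thrCost M B G ℓ D T n * ovOpt M B G ℓ D T ≤
        thrCost M B G ℓ D T T * ovOpt M B G ℓ D n := by
  intro T n _ _
  rcases le_or_gt T n with hTn | hnT
  · rw [thrCost_of_le M B G ℓ D hTn]
    exact Nat.mul_le_mul_left _ (ovOpt_mono M B G ℓ D hTn)
  rcases le_or_gt B n with hBn | hnB
  · rw [ovOpt_of_le M B G ℓ D hBn, ← ovOpt_of_le M B G ℓ D (hBn.trans hnT.le)]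
    exact Nat.mul_le_mul_right _ (thrCost_le_thrCost_self M B G ℓ D T n)
  · rw [ovOpt_of_lt M B G ℓ D hnB, ← thrCost_of_lt M B G ℓ D hnT]
    exact mul_le_mul_min_of_le (thrCost_le_thrCost_self M B G ℓ D T n)
      (ovOpt_le_thrCost_self M B G ℓ D T) (min_le_right _ _)

/-- The instance in which all remaining agents have exactly `T` active days is a worst
case for the symmetric threshold-`T` policy against the overall optimum. -/
theorem stmt16 (M B G ℓ : ℕ) (hM : 2 ≤ M) (hB : 1 ≤ B)
    (hBG : B < G) (hGMB : G < M * B) (hℓ : ℓ ≤ M - 1)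
    (N : ℕ → ℕ) (hN0 : N 0 = 0)
    (hNpos : ∀ n, 1 ≤ n → n ≤ ℓ → 0 < N n)
    (hNmono : ∀ i j, 1 ≤ i → i ≤ j → j ≤ ℓ → N i ≤ N j)
    (D : ℕ) (hD : D = ∑ n ∈ Finset.Icc 1 ℓ, N n) :
    ∀ T n : ℕ, N ℓ < T → N ℓ < n →
      thrCost M B G ℓ D T n * ovOpt M B G ℓ D T ≤
        thrCost M B G ℓ D T T * ovOpt M B G ℓ D n :=
  stmt16_general M B G ℓ N D
end
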